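/- arXiv:1611.02664 — 8 statements merged into one kernel-verified Lean document; each statement's English description precedes it below -/
import Mathlib

section
/- Under the single-time filtering setup, for each index n with 1 ≤ n ≤ D, almost surely E[ 1{H = E_n} | σ(ξ) ] = p_n exp(σ E_n ξ − (σ²/2) E_n² t) / Σ_{r=1}^D p_r exp(σ E_r ξ − (σ²/2) E_r² t), where σ(ξ) denotes the σ-algebra generated by ξ. -/
open MeasureTheory ProbabilityTheory Filter
open scoped NNReal ENNReal

/-- Single-time filtering: the conditional probability of `{H = E n}` given `σ(ξ)`
is given by the Bayes formula. -/
theorem conditional_probability_given_information {Ω : Type*} [MeasureSpace Ω]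
    (hP : IsProbabilityMeasure (ℙ : Measure Ω))
    (D : ℕ) (hD : 1 ≤ D) (E : Fin D → ℝ) (hE : Function.Injective E)
    (σ t : ℝ) (hσ : 0 < σ) (ht : 0 < t)
    (H B : Ω → ℝ) (hH : Measurable H) (hB : Measurable B)
    (hHval : ∀ ω, ∃ r, H ω = E r)
    (hBlaw : Measure.map B (ℙ : Measure Ω) = gaussianReal 0 t.toNNReal)
    (hindep : IndepFun H B (ℙ : Measure Ω))
    (p : Fin D → ℝ) (hp : ∀ r, p r = ((ℙ : Measure Ω) {ω | H ω = E r}).toReal)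
    (ξ : Ω → ℝ) (hξ : ξ = fun ω => σ * t * H ω + B ω)
    (n : Fin D) :
    (ℙ : Measure Ω)[(fun ω => if H ω = E n then (1 : ℝ) else 0) |
        MeasurableSpace.comap ξ Real.measurableSpace]
      =ᵐ[(ℙ : Measure Ω)] fun ω =>
        p n * Real.exp (σ * E n * ξ ω - σ ^ 2 / 2 * (E n) ^ 2 * t) /
          ∑ r, p r * Real.exp (σ * E r * ξ ω - σ ^ 2 / 2 * (E r) ^ 2 * t) := by
  classical
  haveI := hP
  set μ := (ℙ : Measure Ω) with hμ
  set v : ℝ≥0 := t.toNNReal with hv_def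
  have hv : v ≠ 0 := by
    simp only [hv_def, ne_eq, Real.toNNReal_eq_zero, not_le]
    exact ht
  have hvt : (v : ℝ) = t := Real.coe_toNNReal t ht.le
  set γ : Measure ℝ := gaussianReal 0 v with hγ_def
  set c : Fin D → ℝ := fun r => σ * t * E r with hc_def
  set num : Fin D → ℝ → ℝ :=
    fun r x => p r * Real.exp (σ * E r * x - σ ^ 2 / 2 * (E r) ^ 2 * t) with hnum_def
  set den : ℝ → ℝ := fun x => ∑ r, num r x with hden_def
  set φ1 : Fin D → ℝ → ℝ := fun r h => if h = E r then 1 else 0 with hφ1_def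
  have hξm : Measurable ξ := by
    rw [hξ]; exact (hH.const_mul (σ * t)).add hB
  have hφ1m : ∀ r, Measurable (φ1 r) := by
    intro r
    exact Measurable.ite (measurableSet_eq) measurable_const measurable_const
  have hφ1_bd : ∀ r x, |φ1 r x| ≤ 1 := by
    intro r x
    simp only [hφ1_def]
    split <;> simp
  have hp_nonneg : ∀ r, 0 ≤ p r := fun r => (hp r) ▸ ENNReal.toReal_nonneg
  -- pointwise partition of unity
  have hsum_one : ∀ ω, (∑ r, φ1 r (H ω)) = 1 := by
    intro ω
    obtain ⟨r₀, hr₀⟩ := hHval ω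
    have : ∀ r, φ1 r (H ω) = if r = r₀ then 1 else 0 := by
      intro r
      simp only [hφ1_def]
      by_cases h : r = r₀
      · simp [h, hr₀]
      · have : H ω ≠ E r := by
          rw [hr₀]
          exact fun hc => h (hE hc.symm)
        simp [this, h]
    simp [this]
  -- bounded functions are integrable
  have hbint : ∀ (f : Ω → ℝ), Measurable f → (∀ ω, |f ω| ≤ 1) → Integrable f μ := by
    intro f hf hbd
    exact (integrable_const (1 : ℝ)).mono' hf.aestronglyMeasurable
      (Filter.Eventually.of_forall fun ω => by simpa using hbd ω)
  -- integral of the indicator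
  have hpint : ∀ r, ∫ ω, φ1 r (H ω) ∂μ = p r := by
    intro r
    have hset : MeasurableSet {ω | H ω = E r} := hH (measurableSet_eq)
    have : (fun ω => φ1 r (H ω)) = Set.indicator {ω | H ω = E r} (fun _ => (1 : ℝ)) := by
      funext ω
      simp only [hφ1_def, Set.indicator_apply, Set.mem_setOf_eq]
    rw [this, integral_indicator_const (1 : ℝ) hset, hp r]
    simp
    rfl
  -- sum of p r is one
  have hpsum : (∑ r, p r) = 1 := by
    have h1 : ∫ ω, (∑ r, φ1 r (H ω)) ∂μ = 1 := by
      rw [integral_congr_ae (Filter.Eventually.of_forall hsum_one)]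
      simp
    rw [integral_finset_sum (f := fun r ω => φ1 r (H ω)) _ (fun r _ => hbint _ ((hφ1m r).comp hH)
      (fun ω => hφ1_bd r (H ω)))] at h1
    simp_rw [hpint] at h1
    exact h1
  -- positivity of the denominator
  have hnum_pos : ∀ r x, 0 < p r → 0 < num r x := by
    intro r x hpr
    exact mul_pos hpr (Real.exp_pos _)
  have hnum_nonneg : ∀ r x, 0 ≤ num r x := by
    intro r x
    exact mul_nonneg (hp_nonneg r) (Real.exp_pos _).le
  have hden_pos : ∀ x, 0 < den x := by
    intro x
    obtain ⟨r, -, hr⟩ := Finset.exists_ne_zero_of_sum_ne_zero (by rw [hpsum]; norm_num :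
      (∑ r : Fin D, p r) ≠ 0)
    have hpr : 0 < p r := lt_of_le_of_ne (hp_nonneg r) (Ne.symm hr)
    calc 0 < num r x := hnum_pos r x hpr
    _ ≤ den x := Finset.single_le_sum (fun i _ => hnum_nonneg i x) (Finset.mem_univ r)
  have hnum_m : ∀ r, Measurable (num r) := by
    intro r
    apply Measurable.const_mul
    exact Real.measurable_exp.comp (by fun_prop)
  have hden_m : Measurable den := by
    apply Finset.measurable_sum
    intro r _
    exact hnum_m r
  have hg_m : Measurable fun x => num n x / den x := (hnum_m n).div hden_m
  have hg_nonneg : ∀ x, 0 ≤ num n x / den x := fun x =>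
    div_nonneg (hnum_nonneg n x) (hden_pos x).le
  have hg_le_one : ∀ x, num n x / den x ≤ 1 := by
    intro x
    rw [div_le_one (hden_pos x)]
    exact Finset.single_le_sum (fun i _ => hnum_nonneg i x) (Finset.mem_univ n)
  have hg_bd : ∀ x, |num n x / den x| ≤ 1 := fun x =>
    abs_le.2 ⟨by linarith [hg_nonneg x], hg_le_one x⟩
  -- independence key lemma
  have hkey : ∀ (r : Fin D) (ψ : ℝ → ℝ), Measurable ψ →
      ∫ ω, φ1 r (H ω) * ψ (B ω) ∂μ = p r * ∫ x, ψ x ∂γ := by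
    intro r ψ hψ
    have hInd : IndepFun (φ1 r ∘ H) (ψ ∘ B) μ := hindep.comp (hφ1m r) hψ
    calc ∫ ω, φ1 r (H ω) * ψ (B ω) ∂μ
        = (∫ ω, φ1 r (H ω) ∂μ) * ∫ ω, ψ (B ω) ∂μ := by
          have := hInd.integral_mul_eq_mul_integral (((hφ1m r).comp hH).aestronglyMeasurable)
            ((hψ.comp hB).aestronglyMeasurable)
          simpa [Function.comp] using this
      _ = p r * ∫ x, ψ x ∂γ := by
          rw [hpint r]
          congr 1
          rw [← hBlaw]
          exact (integral_map hB.aemeasurable hψ.aestronglyMeasurable).symm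
  -- gaussian shift lemma
  have hshift : ∀ (a : ℝ) (ψ : ℝ → ℝ), Measurable ψ →
      ∫ x, ψ (a + x) ∂γ = ∫ x, ψ x * gaussianPDFReal a v x := by
    intro a ψ hψ
    rw [hγ_def, gaussianReal_of_var_ne_zero _ hv]
    have hpdf_eq : (gaussianPDF 0 v) =
        fun x => ((Real.toNNReal (gaussianPDFReal 0 v x) : ℝ≥0) : ℝ≥0∞) := rfl
    rw [hpdf_eq, integral_withDensity_eq_integral_smul
      ((measurable_gaussianPDFReal 0 v).real_toNNReal) (fun x => ψ (a + x))]
    have h1 : ∀ x, (Real.toNNReal (gaussianPDFReal 0 v x)) • ψ (a + x)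
        = (fun y => ψ y * gaussianPDFReal a v y) (x + a) := by
      intro x
      have hco : ((Real.toNNReal (gaussianPDFReal 0 v x) : ℝ≥0) : ℝ)
          = gaussianPDFReal 0 v x := Real.coe_toNNReal _ (gaussianPDFReal_nonneg 0 v x)
      have hadd : gaussianPDFReal a v (x + a) = gaussianPDFReal 0 v x := by
        rw [gaussianPDFReal_add]
        simp
      simp only [NNReal.smul_def, smul_eq_mul, hco, hadd, add_comm a x]
      ring
    rw [integral_congr_ae (Filter.Eventually.of_forall h1)]
    exact integral_add_right_eq_self (fun y => ψ y * gaussianPDFReal a v y) a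
  -- pointwise density identity
  have hpdf_id : ∀ (r : Fin D) (x : ℝ),
      p r * gaussianPDFReal (c r) v x = num r x * gaussianPDFReal 0 v x := by
    intro r x
    have hexp : Real.exp (-(x - σ * t * E r) ^ 2 / (2 * t))
        = Real.exp (σ * E r * x - σ ^ 2 / 2 * (E r) ^ 2 * t)
          * Real.exp (-(x - 0) ^ 2 / (2 * t)) := by
      rw [← Real.exp_add]
      congr 1
      field_simp
      ring
    simp only [gaussianPDFReal, hvt, hnum_def, hc_def]
    rw [hexp]
    ring
  -- main application of uniqueness of conditional expectation
  have hm : MeasurableSpace.comap ξ Real.measurableSpace ≤ (inferInstance : MeasurableSpace Ω) :=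
    hξm.comap_le
  haveI : SigmaFinite (μ.trim hm) := by
    have : IsFiniteMeasure (μ.trim hm) := isFiniteMeasure_trim hm
    infer_instance
  have hgΩ_m : Measurable fun ω => num n (ξ ω) / den (ξ ω) := hg_m.comp hξm
  have hgΩ_bd : ∀ ω, |num n (ξ ω) / den (ξ ω)| ≤ 1 := fun ω => hg_bd (ξ ω)
  have hgint : Integrable (fun ω => num n (ξ ω) / den (ξ ω)) μ := hbint _ hgΩ_m hgΩ_bd
  have hfint : Integrable (fun ω => φ1 n (H ω)) μ :=
    hbint _ ((hφ1m n).comp hH) (fun ω => hφ1_bd n (H ω))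
  have main : (fun ω => num n (ξ ω) / den (ξ ω)) =ᵐ[μ]
      μ[(fun ω => if H ω = E n then (1 : ℝ) else 0) |
        MeasurableSpace.comap ξ Real.measurableSpace] := by
    apply ae_eq_condExp_of_forall_setIntegral_eq hm
    · exact hfint
    · intro s _ _
      exact hgint.integrableOn
    · intro s hs _
      obtain ⟨S, hS, rfl⟩ := MeasurableSpace.measurableSet_comap.mp hs
      set χ : ℝ → ℝ := S.indicator fun _ => (1 : ℝ) with hχ_def
      have hχm : Measurable χ := measurable_const.indicator hS
      have hχ_bd : ∀ x, |χ x| ≤ 1 := by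
        intro x
        simp only [hχ_def, Set.indicator_apply]
        split <;> simp
      set F : ℝ → ℝ := fun x => χ x * (num n x / den x) with hF_def
      have hFm : Measurable F := hχm.mul hg_m
      have hF_bd : ∀ x, |F x| ≤ 1 := by
        intro x
        simp only [hF_def]
        calc |χ x * (num n x / den x)| = |χ x| * |num n x / den x| := abs_mul _ _
          _ ≤ 1 * 1 := mul_le_mul (hχ_bd x) (hg_bd x) (abs_nonneg _) zero_le_one
          _ = 1 := one_mul 1
      have hL1 : ∫ ω in ξ ⁻¹' S, num n (ξ ω) / den (ξ ω) ∂μ = ∫ ω, F (ξ ω) ∂μ := by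
        rw [← integral_indicator (hξm hS)]
        apply integral_congr_ae (Filter.Eventually.of_forall _)
        intro ω
        by_cases h : ξ ω ∈ S <;>
          simp [hF_def, hχ_def, Set.indicator_apply, h]
      have hpoint : ∀ ω, F (ξ ω) = ∑ r, φ1 r (H ω) * F (c r + B ω) := by
        intro ω
        obtain ⟨r₀, hr₀⟩ := hHval ω
        have hφval : ∀ r, φ1 r (H ω) = if r = r₀ then 1 else 0 := by
          intro r
          simp only [hφ1_def]
          by_cases h : r = r₀
          · simp [h, hr₀]
          · have : H ω ≠ E r := by
              rw [hr₀]; exact fun hc => h (hE hc.symm)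
            simp [this, h]
        have hξω : ξ ω = c r₀ + B ω := by
          rw [hξ]; simp only [hc_def]; rw [hr₀]
        simp only [hφval, ite_mul, one_mul, zero_mul, Finset.sum_ite_eq',
          Finset.mem_univ, if_true]
        rw [hξω]
      have hL2 : ∫ ω, F (ξ ω) ∂μ = ∑ r, ∫ ω, φ1 r (H ω) * F (c r + B ω) ∂μ := by
        rw [integral_congr_ae (Filter.Eventually.of_forall hpoint)]
        apply integral_finset_sum
        intro r _
        apply hbint _ (((hφ1m r).comp hH).mul (hFm.comp (hB.const_add (c r))))
        intro ω
        calc |φ1 r (H ω) * F (c r + B ω)| = |φ1 r (H ω)| * |F (c r + B ω)| := abs_mul _ _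
          _ ≤ 1 * 1 := mul_le_mul (hφ1_bd r _) (hF_bd _) (abs_nonneg _) zero_le_one
          _ = 1 := one_mul 1
      have hL3 : ∀ r : Fin D, ∫ ω, φ1 r (H ω) * F (c r + B ω) ∂μ
          = ∫ y, p r * (F y * gaussianPDFReal (c r) v y) := by
        intro r
        calc ∫ ω, φ1 r (H ω) * F (c r + B ω) ∂μ
            = p r * ∫ x, F (c r + x) ∂γ :=
              hkey r (fun b => F (c r + b)) (hFm.comp (measurable_id.const_add (c r)))
          _ = p r * ∫ y, F y * gaussianPDFReal (c r) v y := by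
              rw [hshift (c r) F hFm]
          _ = ∫ y, p r * (F y * gaussianPDFReal (c r) v y) := (integral_const_mul _ _).symm
      have hInt : ∀ r : Fin D,
          Integrable (fun y => p r * (F y * gaussianPDFReal (c r) v y)) := by
        intro r
        exact (((integrable_gaussianPDFReal (c r) v).bdd_mul hFm.aestronglyMeasurable
          (c := 1) (Filter.Eventually.of_forall fun y => hF_bd y))).const_mul (p r)
      have hE5 : ∀ y, (∑ r, p r * (F y * gaussianPDFReal (c r) v y))
          = χ y * (p n * gaussianPDFReal (c n) v y) := by
        intro y
        have h1 : ∀ r, p r * (F y * gaussianPDFReal (c r) v y)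
            = F y * (num r y * gaussianPDFReal 0 v y) := by
          intro r
          rw [← hpdf_id r y]; ring
        simp only [h1]
        rw [← Finset.mul_sum, ← Finset.sum_mul, hpdf_id n y]
        have hden_eq : (∑ r, num r y) = den y := rfl
        rw [hden_eq, hF_def]
        have hcancel : num n y / den y * den y = num n y :=
          div_mul_cancel₀ _ (hden_pos y).ne'
        calc χ y * (num n y / den y) * (den y * gaussianPDFReal 0 v y)
            = χ y * ((num n y / den y * den y) * gaussianPDFReal 0 v y) := by ring
          _ = χ y * (num n y * gaussianPDFReal 0 v y) := by rw [hcancel]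
      have hR1 : ∫ ω in ξ ⁻¹' S, (if H ω = E n then (1 : ℝ) else 0) ∂μ
          = ∫ ω, φ1 n (H ω) * χ (c n + B ω) ∂μ := by
        rw [← integral_indicator (hξm hS)]
        apply integral_congr_ae (Filter.Eventually.of_forall _)
        intro ω
        by_cases h : H ω = E n
        · have hξω : ξ ω = c n + B ω := by
            rw [hξ]; simp only [hc_def]; rw [h]
          rw [← hξω]
          by_cases h2 : ξ ω ∈ S <;>
            simp [Set.indicator_apply, h, h2, hχ_def, hφ1_def]
        · simp [Set.indicator_apply, hφ1_def, h]
      have hR2 : ∫ ω, φ1 n (H ω) * χ (c n + B ω) ∂μ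
          = ∫ y, χ y * (p n * gaussianPDFReal (c n) v y) := by
        calc ∫ ω, φ1 n (H ω) * χ (c n + B ω) ∂μ
            = p n * ∫ x, χ (c n + x) ∂γ :=
              hkey n (fun b => χ (c n + b)) (hχm.comp (measurable_id.const_add (c n)))
          _ = p n * ∫ y, χ y * gaussianPDFReal (c n) v y := by
              rw [hshift (c n) χ hχm]
          _ = ∫ y, p n * (χ y * gaussianPDFReal (c n) v y) := (integral_const_mul _ _).symm
          _ = ∫ y, χ y * (p n * gaussianPDFReal (c n) v y) :=
              integral_congr_ae (Filter.Eventually.of_forall fun y => by ring)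
      calc ∫ ω in ξ ⁻¹' S, num n (ξ ω) / den (ξ ω) ∂μ
          = ∫ ω, F (ξ ω) ∂μ := hL1
        _ = ∑ r, ∫ ω, φ1 r (H ω) * F (c r + B ω) ∂μ := hL2
        _ = ∑ r, ∫ y, p r * (F y * gaussianPDFReal (c r) v y) :=
            Finset.sum_congr rfl (fun r _ => hL3 r)
        _ = ∫ y, ∑ r, p r * (F y * gaussianPDFReal (c r) v y) :=
            (integral_finset_sum _ (fun r _ => hInt r)).symm
        _ = ∫ y, χ y * (p n * gaussianPDFReal (c n) v y) :=
            integral_congr_ae (Filter.Eventually.of_forall hE5)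
        _ = ∫ ω, φ1 n (H ω) * χ (c n + B ω) ∂μ := hR2.symm
        _ = ∫ ω in ξ ⁻¹' S, (if H ω = E n then (1 : ℝ) else 0) ∂μ := hR1.symm
    · exact ((hg_m.comp (comap_measurable ξ)).stronglyMeasurable).aestronglyMeasurable
  exact main.symm
end

section
/- Under the single-time filtering setup, almost surely E[ H | σ(ξ) ] = Σ_{r=1}^D E_r p_r exp(σ E_r ξ − (σ²/2) E_r² t) / Σ_{r=1}^D p_r exp(σ E_r ξ − (σ²/2) E_r² t), where σ(ξ) denotes the σ-algebra generated by ξ. -/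
open MeasureTheory ProbabilityTheory Filter Real

lemma gauss_setIntegral_aux (c : ℝ) {v : NNReal} (hv : v ≠ 0) (h : ℝ → ℝ)
    {S : Set ℝ} (hS : MeasurableSet S) :
    ∫ x in S, h x ∂(gaussianReal c v) = ∫ x in S, gaussianPDFReal c v x * h x := by
  rw [gaussianReal_of_var_ne_zero c hv]
  have h1 : gaussianPDF c v
      = fun x => ((Real.toNNReal (gaussianPDFReal c v x) : NNReal) : ENNReal) := rfl
  rw [h1, restrict_withDensity hS,
    integral_withDensity_eq_integral_smul ((measurable_gaussianPDFReal c v).real_toNNReal) h]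
  refine setIntegral_congr_fun hS fun x _ => ?_
  simp [NNReal.smul_def, Real.coe_toNNReal _ (gaussianPDFReal_nonneg c v x)]

lemma gauss_pdf_shift (σ t c x : ℝ) (ht : 0 < t) :
    gaussianPDFReal (σ * t * c) t.toNNReal x
      = gaussianPDFReal 0 t.toNNReal x * Real.exp (σ * c * x - σ ^ 2 / 2 * c ^ 2 * t) := by
  have hvt : ((t.toNNReal : NNReal) : ℝ) = t := Real.coe_toNNReal _ ht.le
  simp only [gaussianPDFReal, hvt, sub_zero]
  have ht0 : t ≠ 0 := ht.ne'
  have h2 : rexp (-x ^ 2 / (2 * t)) * rexp (σ * c * x - σ ^ 2 / 2 * c ^ 2 * t)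
      = rexp (-(x - σ * t * c) ^ 2 / (2 * t)) := by
    rw [← Real.exp_add]; congr 1; field_simp; ring
  rw [mul_assoc ((Real.sqrt (2 * π * t))⁻¹), h2]

/-- Numerator of the Bayes formula. -/
noncomputable def bayesNum (D : ℕ) (E p : Fin D → ℝ) (σ t x : ℝ) : ℝ :=
  ∑ r, E r * p r * Real.exp (σ * E r * x - σ ^ 2 / 2 * (E r) ^ 2 * t)

/-- Denominator of the Bayes formula. -/
noncomputable def bayesDen (D : ℕ) (E p : Fin D → ℝ) (σ t x : ℝ) : ℝ :=
  ∑ r, p r * Real.exp (σ * E r * x - σ ^ 2 / 2 * (E r) ^ 2 * t)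

/-- The Bayes formula function. -/
noncomputable def bayesF (D : ℕ) (E p : Fin D → ℝ) (σ t x : ℝ) : ℝ :=
  bayesNum D E p σ t x / bayesDen D E p σ t x

lemma bayesNum_measurable (D : ℕ) (E p : Fin D → ℝ) (σ t : ℝ) :
    Measurable (bayesNum D E p σ t) := by
  unfold bayesNum
  exact Finset.measurable_sum _ fun r _ => by fun_prop

lemma bayesDen_measurable (D : ℕ) (E p : Fin D → ℝ) (σ t : ℝ) :
    Measurable (bayesDen D E p σ t) := by
  unfold bayesDen
  exact Finset.measurable_sum _ fun r _ => by fun_prop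

lemma bayesF_measurable (D : ℕ) (E p : Fin D → ℝ) (σ t : ℝ) :
    Measurable (bayesF D E p σ t) :=
  (bayesNum_measurable D E p σ t).div (bayesDen_measurable D E p σ t)

lemma bayesDen_pos (D : ℕ) (E p : Fin D → ℝ) (σ t : ℝ) (hp : ∀ r, 0 ≤ p r)
    (hex : ∃ r, 0 < p r) (x : ℝ) : 0 < bayesDen D E p σ t x := by
  obtain ⟨r0, hr0⟩ := hex
  refine Finset.sum_pos' (fun r _ => mul_nonneg (hp r) (Real.exp_pos _).le) ?_
  exact ⟨r0, Finset.mem_univ r0, mul_pos hr0 (Real.exp_pos _)⟩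

lemma bayesF_bound (D : ℕ) (E p : Fin D → ℝ) (σ t : ℝ) (hp : ∀ r, 0 ≤ p r)
    (hex : ∃ r, 0 < p r) (x : ℝ) : |bayesF D E p σ t x| ≤ ∑ r, |E r| := by
  set C : ℝ := ∑ r, |E r| with hC
  have hden := bayesDen_pos D E p σ t hp hex x
  have hnum : |bayesNum D E p σ t x| ≤ C * bayesDen D E p σ t x := by
    refine le_trans (Finset.abs_sum_le_sum_abs _ _) ?_
    rw [hC, bayesDen, Finset.sum_mul_sum]
    refine Finset.sum_le_sum fun i _ => ?_
    calc |E i * p i * rexp (σ * E i * x - σ ^ 2 / 2 * E i ^ 2 * t)|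
        = |E i| * (p i * rexp (σ * E i * x - σ ^ 2 / 2 * E i ^ 2 * t)) := by
          rw [abs_mul, abs_mul, abs_of_nonneg (hp i), abs_of_pos (Real.exp_pos _), mul_assoc]
      _ ≤ ∑ j, |E i| * (p j * rexp (σ * E j * x - σ ^ 2 / 2 * E j ^ 2 * t)) := by
          refine Finset.single_le_sum (f := fun j => |E i| * (p j * rexp (σ * E j * x - σ ^ 2 / 2 * E j ^ 2 * t))) (fun j _ => mul_nonneg (abs_nonneg _) (mul_nonneg (hp j) (Real.exp_pos _).le)) (Finset.mem_univ i)
  rw [bayesF, abs_div, abs_of_pos hden, div_le_iff₀ hden]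
  exact hnum

/-- Single-time filtering: the conditional expectation of the signal `H` given `σ(ξ)`
is given by the Bayes formula. -/
theorem conditional_expectation_of_energy_given_information {Ω : Type*} [MeasureSpace Ω]
    (hP : IsProbabilityMeasure (ℙ : Measure Ω))
    (D : ℕ) (hD : 1 ≤ D) (E : Fin D → ℝ) (hE : Function.Injective E)
    (σ t : ℝ) (hσ : 0 < σ) (ht : 0 < t)
    (H B : Ω → ℝ) (hH : Measurable H) (hB : Measurable B)
    (hHval : ∀ ω, ∃ r, H ω = E r)
    (hBlaw : Measure.map B (ℙ : Measure Ω) = gaussianReal 0 t.toNNReal)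
    (hindep : IndepFun H B (ℙ : Measure Ω))
    (p : Fin D → ℝ) (hp : ∀ r, p r = ((ℙ : Measure Ω) {ω | H ω = E r}).toReal)
    (ξ : Ω → ℝ) (hξ : ξ = fun ω => σ * t * H ω + B ω) :
    (ℙ : Measure Ω)[H | MeasurableSpace.comap ξ Real.measurableSpace]
      =ᵐ[(ℙ : Measure Ω)] fun ω =>
        (∑ r, E r * p r * Real.exp (σ * E r * ξ ω - σ ^ 2 / 2 * (E r) ^ 2 * t)) /
          ∑ r, p r * Real.exp (σ * E r * ξ ω - σ ^ 2 / 2 * (E r) ^ 2 * t) := by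
  haveI := hP
  have ht0 : t ≠ 0 := ht.ne'
  have hv : t.toNNReal ≠ 0 := by
    simp only [ne_eq, Real.toNNReal_eq_zero, not_le]; exact ht
  have hξm : Measurable ξ := by rw [hξ]; fun_prop
  have hm : MeasurableSpace.comap ξ Real.measurableSpace ≤ _ := hξm.comap_le
  set F : ℝ → ℝ := bayesF D E p σ t with hFdef
  set A : Fin D → Set Ω := fun r => H ⁻¹' {E r} with hA
  have hAm : ∀ r, MeasurableSet (A r) := fun r => hH (measurableSet_singleton _)
  have hAdisj : Pairwise (Function.onFun Disjoint A) := by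
    intro r s hrs
    rw [Function.onFun, Set.disjoint_left]
    rintro ω hr hs'
    have hr' : H ω = E r := hr
    have hs'' : H ω = E s := hs'
    exact hrs (hE (hr' ▸ hs''))
  have hAunion : (⋃ r, A r) = Set.univ := by
    ext ω
    simp only [Set.mem_iUnion, Set.mem_univ, iff_true, hA, Set.mem_preimage,
      Set.mem_singleton_iff]
    exact hHval ω
  have hpnn : ∀ r, 0 ≤ p r := fun r => (hp r) ▸ ENNReal.toReal_nonneg
  have hpA : ∀ r, p r = ((ℙ : Measure Ω) (A r)).toReal := fun r => hp r
  have hpex : ∃ r, 0 < p r := by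
    by_contra hcon
    push_neg at hcon
    have hz : ∀ r, (ℙ : Measure Ω) (A r) = 0 := by
      intro r
      have hp0 : p r = 0 := le_antisymm (hcon r) (hpnn r)
      rw [hpA r] at hp0
      exact ((ENNReal.toReal_eq_zero_iff _).mp hp0).resolve_right (measure_ne_top _ _)
    have huniv : (ℙ : Measure Ω) Set.univ = 0 := by
      rw [← hAunion]
      exact measure_iUnion_null hz
    simp [measure_univ] at huniv
  set C : ℝ := ∑ r, |E r| with hC
  have hFm : Measurable F := bayesF_measurable D E p σ t
  have hFb : ∀ x, |F x| ≤ C := bayesF_bound D E p σ t hpnn hpex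
  have hHint : Integrable H (ℙ : Measure Ω) := by
    refine Integrable.mono' (integrable_const C) hH.aestronglyMeasurable ?_
    filter_upwards with ω
    obtain ⟨r, hr⟩ := hHval ω
    rw [Real.norm_eq_abs, hr]
    exact Finset.single_le_sum (f := fun i => |E i|) (fun i _ => abs_nonneg _)
      (Finset.mem_univ r)
  have hFξint : Integrable (fun ω => F (ξ ω)) (ℙ : Measure Ω) :=
    Integrable.mono' (integrable_const C) (hFm.comp hξm).aestronglyMeasurable
      (Filter.Eventually.of_forall fun ω => by rw [Real.norm_eq_abs]; exact hFb _)
  -- the key set-integral identity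
  have key : ∀ S : Set ℝ, MeasurableSet S →
      ∫ ω in ξ ⁻¹' S, F (ξ ω) ∂(ℙ : Measure Ω) = ∫ ω in ξ ⁻¹' S, H ω ∂(ℙ : Measure Ω) := by
    intro S hS
    have hTm : MeasurableSet (ξ ⁻¹' S) := hξm hS
    -- partition lemma
    have hpart : ∀ G : Ω → ℝ, Integrable G (ℙ : Measure Ω) →
        ∫ ω in ξ ⁻¹' S, G ω ∂(ℙ : Measure Ω)
          = ∑ r, ∫ ω in ξ ⁻¹' S ∩ A r, G ω ∂(ℙ : Measure Ω) := by
      intro G hG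
      have hT : ξ ⁻¹' S = ⋃ r, ξ ⁻¹' S ∩ A r := by
        rw [← Set.inter_iUnion, hAunion, Set.inter_univ]
      conv_lhs => rw [hT]
      exact integral_iUnion_fintype (fun r => hTm.inter (hAm r))
        (fun r s hrs => (hAdisj hrs).mono Set.inter_subset_right Set.inter_subset_right)
        (fun r => hG.integrableOn)
    -- the product-measure identity
    have hmeasprod : ∀ r, (ℙ : Measure Ω) (ξ ⁻¹' S ∩ A r)
        = (ℙ : Measure Ω) (A r) * gaussianReal (σ * t * E r) t.toNNReal S := by
      intro r
      have hTA : ξ ⁻¹' S ∩ A r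
          = A r ∩ B ⁻¹' ((fun b => σ * t * E r + b) ⁻¹' S) := by
        ext ω
        simp only [Set.mem_inter_iff, Set.mem_preimage, Set.mem_singleton_iff, hξ, hA]
        constructor
        · rintro ⟨hs, hr⟩; exact ⟨hr, by rwa [← hr]⟩
        · rintro ⟨hr, hs⟩; exact ⟨by rwa [hr], hr⟩
      rw [hTA, indepFun_iff_measure_inter_preimage_eq_mul.mp hindep _ _
        (measurableSet_singleton _) ((measurable_const_add _) hS)]
      congr 1
      rw [← Measure.map_apply hB ((measurable_const_add _) hS), hBlaw,
        ← Measure.map_apply (measurable_const_add (σ * t * E r)) hS,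
        gaussianReal_map_const_add, zero_add]
    -- the H side
    have hHside : ∀ r, ∫ ω in ξ ⁻¹' S ∩ A r, H ω ∂(ℙ : Measure Ω)
        = E r * p r * ((gaussianReal (σ * t * E r) t.toNNReal) S).toReal := by
      intro r
      have hcongr : ∫ ω in ξ ⁻¹' S ∩ A r, H ω ∂(ℙ : Measure Ω)
          = ∫ _ω in ξ ⁻¹' S ∩ A r, E r ∂(ℙ : Measure Ω) :=
        setIntegral_congr_fun (hTm.inter (hAm r)) (fun ω hω => hω.2)
      rw [hcongr, setIntegral_const, measureReal_def, hmeasprod r, ENNReal.toReal_mul, ← hpA r,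
        smul_eq_mul]
      ring
    -- the F side
    have hFside : ∀ r, ∫ ω in ξ ⁻¹' S ∩ A r, F (ξ ω) ∂(ℙ : Measure Ω)
        = p r * ∫ x in S, F x ∂(gaussianReal (σ * t * E r) t.toNNReal) := by
      intro r
      set c : ℝ := σ * t * E r with hc
      set φ : ℝ → ℝ := Set.indicator {E r} fun _ => (1 : ℝ) with hφ
      set g : ℝ → ℝ := fun b => Set.indicator S F (c + b) with hg
      have hφm : Measurable φ := measurable_const.indicator (measurableSet_singleton _)
      have hgm' : Measurable g := (hFm.indicator hS).comp (measurable_const_add c)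
      have hind : ∀ ω, Set.indicator (ξ ⁻¹' S ∩ A r) (fun ω => F (ξ ω)) ω
          = φ (H ω) * g (B ω) := by
        intro ω
        by_cases hr : H ω = E r
        · have hξω : ξ ω = c + B ω := by simp only [hξ, hc, hr]
          simp only [hφ, hg, hA, Set.indicator_apply, Set.mem_inter_iff, Set.mem_preimage,
            Set.mem_singleton_iff, ← hξω]
          by_cases hmem : ξ ω ∈ S <;> simp [hr, hmem]
        · simp only [hφ, hg, hA, Set.indicator_apply, Set.mem_inter_iff, Set.mem_preimage,
            Set.mem_singleton_iff]
          simp [hr]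
      calc ∫ ω in ξ ⁻¹' S ∩ A r, F (ξ ω) ∂(ℙ : Measure Ω)
          = ∫ ω, Set.indicator (ξ ⁻¹' S ∩ A r) (fun ω => F (ξ ω)) ω ∂(ℙ : Measure Ω) :=
            (integral_indicator (hTm.inter (hAm r))).symm
        _ = ∫ ω, φ (H ω) * g (B ω) ∂(ℙ : Measure Ω) := by
            exact integral_congr_ae (Filter.Eventually.of_forall hind)
        _ = (∫ ω, φ (H ω) ∂(ℙ : Measure Ω)) * ∫ ω, g (B ω) ∂(ℙ : Measure Ω) :=
            (hindep.comp hφm hgm').integral_fun_mul_eq_mul_integral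
              (hφm.comp hH).aestronglyMeasurable (hgm'.comp hB).aestronglyMeasurable
        _ = p r * ∫ x in S, F x ∂(gaussianReal (σ * t * E r) t.toNNReal) := by
            congr 1
            · have hφH : (fun ω => φ (H ω)) = Set.indicator (A r) fun _ => (1 : ℝ) := by
                ext ω
                simp only [hφ, hA, Set.indicator_apply, Set.mem_preimage,
                  Set.mem_singleton_iff]
                by_cases hr : H ω = E r <;> simp [Set.indicator_apply, hr]
              rw [hφH, integral_indicator_const _ (hAm r), smul_eq_mul, mul_one, hpA r, measureReal_def]
            · rw [← integral_map hB.aemeasurable hgm'.aestronglyMeasurable, hBlaw]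
              have hmap : ∫ b, g b ∂(gaussianReal 0 t.toNNReal)
                  = ∫ y, Set.indicator S F y
                      ∂((gaussianReal 0 t.toNNReal).map (fun b => c + b)) :=
                (integral_map (measurable_const_add c).aemeasurable
                  (hFm.indicator hS).aestronglyMeasurable).symm
              rw [hmap, gaussianReal_map_const_add, zero_add, integral_indicator hS, hc]
    -- the gaussian density computation
    have hshift : ∀ (a x : ℝ), gaussianPDFReal (σ * t * a) t.toNNReal x
        = gaussianPDFReal 0 t.toNNReal x
          * Real.exp (σ * a * x - σ ^ 2 / 2 * a ^ 2 * t) :=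
      fun a x => gauss_pdf_shift σ t a x ht
    have hνS : ∀ r, ((gaussianReal (σ * t * E r) t.toNNReal) S).toReal
        = ∫ x in S, gaussianPDFReal (σ * t * E r) t.toNNReal x ∂volume := by
      intro r
      have h1 : ∫ _x in S, (1 : ℝ) ∂(gaussianReal (σ * t * E r) t.toNNReal)
          = ((gaussianReal (σ * t * E r) t.toNNReal) S).toReal := by
        rw [setIntegral_const, smul_eq_mul, mul_one, measureReal_def]
      rw [← h1, gauss_setIntegral_aux _ hv _ hS]
      simp only [mul_one]
    have hptw : ∀ x : ℝ,
        ∑ r, p r * (gaussianPDFReal (σ * t * E r) t.toNNReal x * F x)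
          = ∑ r, E r * p r * gaussianPDFReal (σ * t * E r) t.toNNReal x := by
      intro x
      have hd := bayesDen_pos D E p σ t hpnn hpex x
      simp only [hshift]
      have lhs_eq : ∑ r, p r * (gaussianPDFReal 0 t.toNNReal x
            * Real.exp (σ * E r * x - σ ^ 2 / 2 * (E r) ^ 2 * t) * F x)
          = (F x * gaussianPDFReal 0 t.toNNReal x) * bayesDen D E p σ t x := by
        rw [bayesDen, Finset.mul_sum]
        refine Finset.sum_congr rfl fun r _ => by ring
      have rhs_eq : ∑ r, E r * p r * (gaussianPDFReal 0 t.toNNReal x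
            * Real.exp (σ * E r * x - σ ^ 2 / 2 * (E r) ^ 2 * t))
          = gaussianPDFReal 0 t.toNNReal x * bayesNum D E p σ t x := by
        rw [bayesNum, Finset.mul_sum]
        refine Finset.sum_congr rfl fun r _ => by ring
      rw [lhs_eq, rhs_eq, hFdef, bayesF]
      field_simp
    have hint1 : ∀ r, IntegrableOn
        (fun x => gaussianPDFReal (σ * t * E r) t.toNNReal x * F x) S volume := by
      intro r
      have hpdfint : IntegrableOn (gaussianPDFReal (σ * t * E r) t.toNNReal) S volume :=
        (integrable_gaussianPDFReal (σ * t * E r) t.toNNReal).restrict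
      have := hpdfint.bdd_mul (c := C) hFm.aestronglyMeasurable.restrict
        (Filter.Eventually.of_forall fun x => by rw [Real.norm_eq_abs]; exact hFb x)
      refine this.congr (Filter.Eventually.of_forall fun x => by ring)
    have hint2 : ∀ r, IntegrableOn
        (fun x => gaussianPDFReal (σ * t * E r) t.toNNReal x) S volume :=
      fun r => (integrable_gaussianPDFReal (σ * t * E r) t.toNNReal).restrict
    have hgauss : ∑ r, p r * ∫ x in S, F x ∂(gaussianReal (σ * t * E r) t.toNNReal)
        = ∑ r, E r * p r * ((gaussianReal (σ * t * E r) t.toNNReal) S).toReal := by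
      calc ∑ r, p r * ∫ x in S, F x ∂(gaussianReal (σ * t * E r) t.toNNReal)
          = ∑ r, ∫ x in S,
              p r * (gaussianPDFReal (σ * t * E r) t.toNNReal x * F x) ∂volume := by
            refine Finset.sum_congr rfl fun r _ => ?_
            rw [gauss_setIntegral_aux _ hv _ hS, ← integral_const_mul]
        _ = ∫ x in S, ∑ r,
              p r * (gaussianPDFReal (σ * t * E r) t.toNNReal x * F x) ∂volume :=
            (integral_finset_sum _ fun r _ => (hint1 r).const_mul (p r)).symm
        _ = ∫ x in S, ∑ r,
              E r * p r * gaussianPDFReal (σ * t * E r) t.toNNReal x ∂volume := by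
            refine setIntegral_congr_fun hS fun x _ => hptw x
        _ = ∑ r, ∫ x in S,
              E r * p r * gaussianPDFReal (σ * t * E r) t.toNNReal x ∂volume :=
            integral_finset_sum _ fun r _ => (hint2 r).const_mul (E r * p r)
        _ = ∑ r, E r * p r * ((gaussianReal (σ * t * E r) t.toNNReal) S).toReal := by
            refine Finset.sum_congr rfl fun r _ => ?_
            rw [integral_const_mul, hνS r]
    rw [hpart (fun ω => F (ξ ω)) hFξint, hpart H hHint]
    calc ∑ r, ∫ ω in ξ ⁻¹' S ∩ A r, F (ξ ω) ∂(ℙ : Measure Ω)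
        = ∑ r, p r * ∫ x in S, F x ∂(gaussianReal (σ * t * E r) t.toNNReal) :=
          Finset.sum_congr rfl fun r _ => hFside r
      _ = ∑ r, E r * p r * ((gaussianReal (σ * t * E r) t.toNNReal) S).toReal := hgauss
      _ = ∑ r, ∫ ω in ξ ⁻¹' S ∩ A r, H ω ∂(ℙ : Measure Ω) :=
          Finset.sum_congr rfl fun r _ => (hHside r).symm
  -- conclude via uniqueness of conditional expectation
  refine Filter.EventuallyEq.symm
    (ae_eq_condExp_of_forall_setIntegral_eq hm hHint
      (fun s _ _ => hFξint.integrableOn) ?_ ?_)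
  · intro s hs _
    obtain ⟨S, hS, rfl⟩ := hs
    exact key S hS
  · have hξm' : Measurable[MeasurableSpace.comap ξ Real.measurableSpace] ξ :=
      Measurable.of_comap_le le_rfl
    exact StronglyMeasurable.aestronglyMeasurable
      ((hFm.comp hξm').stronglyMeasurable)
end

section
/- Fix an integer D ≥ 1, distinct real numbers E_1, …, E_D, nonnegative reals p_1, …, p_D, a constant σ > 0, and an index n with p_n > 0. Let x : [0,∞) → ℝ be any function such that (x(t) − σ t E_n)/t → 0 as t → ∞. Then p_n exp(σ E_n x(t) − (σ²/2) E_n² t) / Σ_{r=1}^D p_r exp(σ E_r x(t) − (σ²/2) E_r² t) → 1 as t → ∞. -/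
open Filter

/-- Deterministic collapse lemma: if `(x t - σ t Eₙ)/t → 0` then the Bayes posterior
weight of level `n` tends to `1`. -/
theorem posterior_tendsto_one (D : ℕ) (hD : 1 ≤ D) (E : Fin D → ℝ)
    (hE : Function.Injective E)
    (p : Fin D → ℝ) (hp : ∀ r, 0 ≤ p r) (σ : ℝ) (hσ : 0 < σ)
    (n : Fin D) (hpn : 0 < p n)
    (x : ℝ → ℝ)
    (hx : Tendsto (fun t => (x t - σ * t * E n) / t) atTop (nhds 0)) :
    Tendsto (fun t =>
        p n * Real.exp (σ * E n * x t - σ ^ 2 / 2 * (E n) ^ 2 * t) /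
          ∑ r, p r * Real.exp (σ * E r * x t - σ ^ 2 / 2 * (E r) ^ 2 * t))
      atTop (nhds 1) := by
  set A : Fin D → ℝ → ℝ := fun r t => σ * E r * x t - σ ^ 2 / 2 * (E r) ^ 2 * t with hA
  have key : ∀ r, r ≠ n → Tendsto (fun t => Real.exp (A r t - A n t)) atTop (nhds 0) := by
    intro r hr
    have hd : E r - E n ≠ 0 := sub_ne_zero.mpr (fun h => hr (hE h))
    have hc : (0:ℝ) < σ ^ 2 / 2 * (E r - E n) ^ 2 := by positivity
    have h1 : Tendsto (fun t => σ * (E r - E n) * ((x t - σ * t * E n) / t)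
        - σ ^ 2 / 2 * (E r - E n) ^ 2) atTop (nhds (-(σ ^ 2 / 2 * (E r - E n) ^ 2))) := by
      have h0 := (hx.const_mul (σ * (E r - E n))).sub_const (σ ^ 2 / 2 * (E r - E n) ^ 2)
      simpa using h0
    have h2 : Tendsto (fun t => t * (σ * (E r - E n) * ((x t - σ * t * E n) / t)
        - σ ^ 2 / 2 * (E r - E n) ^ 2)) atTop atBot :=
      Tendsto.atTop_mul_neg (by linarith) tendsto_id h1
    have h3 : Tendsto (fun t => A r t - A n t) atTop atBot := by
      apply h2.congr'
      filter_upwards [eventually_gt_atTop (0:ℝ)] with t ht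
      have htne : t ≠ 0 := ne_of_gt ht
      simp only [hA]
      field_simp
      ring
    exact Real.tendsto_exp_atBot.comp h3
  have sumlim : Tendsto (fun t => ∑ r, p r * Real.exp (A r t - A n t)) atTop (nhds (p n)) := by
    have h : Tendsto (fun t => ∑ r, p r * Real.exp (A r t - A n t)) atTop
        (nhds (∑ r, if r = n then p r else 0)) := by
      apply tendsto_finset_sum
      intro r _
      by_cases h : r = n
      · subst h
        simpa using (tendsto_const_nhds : Tendsto (fun _ : ℝ => p r) atTop (nhds (p r)))
      · simpa [h] using (key r h).const_mul (p r)
    simpa [Finset.sum_ite_eq'] using h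
  have main : Tendsto (fun t => p n / ∑ r, p r * Real.exp (A r t - A n t)) atTop (nhds 1) := by
    have h := (tendsto_const_nhds : Tendsto (fun _ : ℝ => p n) atTop (nhds (p n))).div sumlim hpn.ne'
    simpa [div_self hpn.ne', Pi.div_def] using h
  apply main.congr
  intro t
  have hsum : ∑ r, p r * Real.exp (A r t - A n t)
      = (∑ r, p r * Real.exp (A r t)) / Real.exp (A n t) := by
    rw [eq_div_iff (Real.exp_pos _).ne', Finset.sum_mul]
    apply Finset.sum_congr rfl
    intro r _
    rw [mul_assoc, ← Real.exp_add]
    ring_nf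
  rw [hsum, div_div_eq_mul_div]
end

section
/- Let (Ω, 𝓕, ℙ) be a probability space, D ≥ 1, E_1, …, E_D distinct reals, σ > 0, and let H : Ω → ℝ take values in {E_1, …, E_D} with p_r := ℙ(H = E_r) > 0 for every r. Let (B_t)_{t ≥ 0} be any family of random variables with B_t / t → 0 almost surely as t → ∞, and set ξ_t := σ t H + B_t and π_n(t) := p_n exp(σ E_n ξ_t − (σ²/2) E_n² t) / Σ_{r=1}^D p_r exp(σ E_r ξ_t − (σ²/2) E_r² t). Then almost surely, for every n, π_n(t) → 1{H = E_n} as t → ∞. -/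
open MeasureTheory ProbabilityTheory Filter

/-- Collapse of the conditional state: almost surely, the posterior weight of each
energy level tends to the indicator of the event that the signal equals that level. -/
theorem posterior_collapse_as {Ω : Type*} [MeasureSpace Ω]
    (hP : IsProbabilityMeasure (ℙ : Measure Ω))
    (D : ℕ) (hD : 1 ≤ D) (E : Fin D → ℝ) (hE : Function.Injective E)
    (σ : ℝ) (hσ : 0 < σ)
    (H : Ω → ℝ) (hH : Measurable H) (hHval : ∀ ω, ∃ r, H ω = E r)
    (p : Fin D → ℝ) (hp : ∀ r, p r = ((ℙ : Measure Ω) {ω | H ω = E r}).toReal)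
    (hppos : ∀ r, 0 < p r)
    (B : ℝ → Ω → ℝ)
    (hB : ∀ᵐ ω ∂(ℙ : Measure Ω), Tendsto (fun t => B t ω / t) atTop (nhds 0))
    (ξ : ℝ → Ω → ℝ) (hξ : ∀ t ω, ξ t ω = σ * t * H ω + B t ω)
    (π : Fin D → ℝ → Ω → ℝ)
    (hπ : ∀ n t ω, π n t ω =
      p n * Real.exp (σ * E n * ξ t ω - σ ^ 2 / 2 * (E n) ^ 2 * t) /
        ∑ r, p r * Real.exp (σ * E r * ξ t ω - σ ^ 2 / 2 * (E r) ^ 2 * t)) :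
    ∀ᵐ ω ∂(ℙ : Measure Ω), ∀ n : Fin D,
      Tendsto (fun t => π n t ω) atTop
        (nhds (if H ω = E n then (1 : ℝ) else 0)) := by
  filter_upwards [hB] with ω hω
  intro n
  obtain ⟨r₀, hr₀⟩ := hHval ω
  set a : Fin D → ℝ → ℝ := fun r t => σ * E r * ξ t ω - σ ^ 2 / 2 * (E r) ^ 2 * t with ha
  -- limit of exponential differences
  have key : ∀ r : Fin D, Tendsto (fun t => Real.exp (a r t - a r₀ t)) atTop
      (nhds (if r = r₀ then 1 else 0)) := by
    intro r
    by_cases hr : r = r₀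
    · subst hr; simp
    · simp only [if_neg hr]
      have hΔ : E r - E r₀ ≠ 0 := sub_ne_zero.mpr (fun h => hr (hE h))
      have hc : -(σ ^ 2 / 2 * (E r - E r₀) ^ 2) < 0 := by
        have : 0 < σ ^ 2 / 2 * (E r - E r₀) ^ 2 := by positivity
        linarith
      have heq : ∀ᶠ t in atTop, t * (-(σ ^ 2 / 2 * (E r - E r₀) ^ 2)
          + σ * (E r - E r₀) * (B t ω / t)) = a r t - a r₀ t := by
        filter_upwards [eventually_gt_atTop (0:ℝ)] with t ht
        have ht' : t ≠ 0 := ne_of_gt ht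
        simp only [ha, hξ, hr₀]
        field_simp
        ring
      have hlim : Tendsto (fun t => -(σ ^ 2 / 2 * (E r - E r₀) ^ 2)
          + σ * (E r - E r₀) * (B t ω / t)) atTop
          (nhds (-(σ ^ 2 / 2 * (E r - E r₀) ^ 2))) := by
        have h2 := (hω.const_mul (σ * (E r - E r₀))).const_add
          (-(σ ^ 2 / 2 * (E r - E r₀) ^ 2))
        simpa using h2
      have hbot : Tendsto (fun t => a r t - a r₀ t) atTop atBot :=
        Tendsto.congr' heq (tendsto_id.atTop_mul_neg hc hlim)
      exact Real.tendsto_exp_atBot.comp hbot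
  have hsum : Tendsto (fun t => ∑ r, p r * Real.exp (a r t - a r₀ t)) atTop
      (nhds (p r₀)) := by
    have h := tendsto_finset_sum Finset.univ (fun r (_ : r ∈ Finset.univ) => (key r).const_mul (p r))
    have hval : ∑ r, p r * (if r = r₀ then (1:ℝ) else 0) = p r₀ := by
      simp [mul_ite]
    rw [← hval]
    exact h
  have hnum : Tendsto (fun t => p n * Real.exp (a n t - a r₀ t)) atTop
      (nhds (p n * (if n = r₀ then (1:ℝ) else 0))) := (key n).const_mul (p n)
  have hdiv := hnum.div hsum (ne_of_gt (hppos r₀))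
  have hrw : (fun t => π n t ω) = fun t =>
      p n * Real.exp (a n t - a r₀ t) / ∑ r, p r * Real.exp (a r t - a r₀ t) := by
    funext t
    have hne : (Real.exp (a r₀ t))⁻¹ ≠ 0 := inv_ne_zero (Real.exp_ne_zero _)
    have hterm : ∀ r : Fin D, p r * Real.exp (a r t - a r₀ t)
        = p r * Real.exp (a r t) * (Real.exp (a r₀ t))⁻¹ := by
      intro r
      rw [Real.exp_sub, div_eq_mul_inv, mul_assoc]
    rw [hπ, hterm n]
    have hs : ∑ r, p r * Real.exp (a r t - a r₀ t)
        = (∑ r, p r * Real.exp (a r t)) * (Real.exp (a r₀ t))⁻¹ := by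
      rw [Finset.sum_mul]
      exact Finset.sum_congr rfl fun r _ => hterm r
    rw [hs, mul_div_mul_right _ _ hne]
  rw [hrw]
  have hfinal : p n * (if n = r₀ then (1:ℝ) else 0) / p r₀
      = if H ω = E n then (1:ℝ) else 0 := by
    by_cases h : n = r₀
    · subst h
      simp [hr₀, div_self (ne_of_gt (hppos n))]
    · have : ¬ (H ω = E n) := by
        rw [hr₀]
        intro hEq
        exact h (hE hEq).symm
      simp [h, this]
  rw [← hfinal]
  exact hdiv
end

section
/- Assume the spectral setup, and additionally let H : Ω → ℝ be a random variable on a probability space (Ω, 𝓕, ℙ) taking values in {E_1, …, E_D} with ℙ(H = E_r) = p_r := Re(tr(ρ_0 P_r)) for each r, let (B_t)_{t ≥ 0} satisfy B_t / t → 0 almost surely, and set ξ_t := σ t H + B_t. Then the probability of the event { Re(tr(ρ_t(ξ_t) P_n)) → 1 as t → ∞ } equals Re(tr(ρ_0 P_n)); that is, the state collapses to the energy level E_n with the Born-rule probability tr(ρ_0 P_n). -/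
open MeasureTheory ProbabilityTheory Filter Matrix
open scoped ComplexOrder Nat

set_option maxHeartbeats 1000000

section Aux
variable {N D : ℕ} (P : Fin D → Matrix (Fin N) (Fin N) ℂ)

lemma sum_smul_proj_pow
    (hPorth : ∀ r s, r ≠ s → P r * P s = 0)
    (hPidem : ∀ r, P r * P r = P r)
    (hPsum : ∑ r, P r = 1) (c : Fin D → ℂ) (k : ℕ) :
    (∑ r, c r • P r) ^ k = ∑ r, (c r ^ k) • P r := by
  induction k with
  | zero => simpa using hPsum.symm
  | succ k ih =>
    rw [pow_succ, ih, Finset.sum_mul_sum, Finset.sum_comm]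
    refine Finset.sum_congr rfl fun s _ => ?_
    rw [Finset.sum_eq_single s]
    · rw [smul_mul_smul_comm, hPidem, pow_succ]
    · intro r _ hrs
      rw [smul_mul_smul_comm, hPorth r s hrs, smul_zero]
    · intro h; exact absurd (Finset.mem_univ s) h

lemma exp_sum_smul_proj
    (hPorth : ∀ r s, r ≠ s → P r * P s = 0)
    (hPidem : ∀ r, P r * P r = P r)
    (hPsum : ∑ r, P r = 1) (c : Fin D → ℂ) :
    NormedSpace.exp (∑ r, c r • P r) = ∑ r, Complex.exp (c r) • P r := by
  have hsummable : ∀ r : Fin D, Summable fun k : ℕ => ((k ! : ℂ)⁻¹ * c r ^ k) • P r := by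
    intro r
    have := NormedSpace.expSeries_summable' (𝕂 := ℂ) (c r)
    simpa [smul_eq_mul] using this.smul_const (P r)
  rw [NormedSpace.exp_eq_tsum ℂ]
  calc (∑' k : ℕ, (k ! : ℂ)⁻¹ • (∑ r, c r • P r) ^ k)
      = ∑' k : ℕ, ∑ r, ((k ! : ℂ)⁻¹ * c r ^ k) • P r := by
        refine tsum_congr fun k => ?_
        rw [sum_smul_proj_pow P hPorth hPidem hPsum, Finset.smul_sum]
        exact Finset.sum_congr rfl fun r _ => (smul_smul _ _ _)
    _ = ∑ r, ∑' k : ℕ, ((k ! : ℂ)⁻¹ * c r ^ k) • P r :=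
        Summable.tsum_finsetSum fun r _ => hsummable r
    _ = ∑ r, Complex.exp (c r) • P r := by
        refine Finset.sum_congr rfl fun r _ => ?_
        have hs : Summable fun k : ℕ => (k ! : ℂ)⁻¹ * c r ^ k := by
          simpa [smul_eq_mul] using NormedSpace.expSeries_summable' (𝕂 := ℂ) (c r)
        rw [Summable.tsum_smul_const hs, Complex.exp_eq_exp_ℂ, NormedSpace.exp_eq_tsum ℂ]
        simp [smul_eq_mul]

lemma trace_proj_mul
    (hPherm : ∀ r, (P r).IsHermitian)
    (hPorth : ∀ r s, r ≠ s → P r * P s = 0)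
    (hPidem : ∀ r, P r * P r = P r)
    (ρ0 : Matrix (Fin N) (Fin N) ℂ) (f : Fin D → ℂ) (n : Fin D) :
    ((∑ r, f r • P r) * ρ0 * (∑ r, f r • P r)ᴴ * P n).trace
      = f n * star (f n) * (ρ0 * P n).trace := by
  have hconjT : (∑ r, f r • P r)ᴴ = ∑ r, star (f r) • P r := by
    rw [conjTranspose_sum]
    exact Finset.sum_congr rfl fun r _ => by rw [conjTranspose_smul, (hPherm r).eq]
  have h1 : (∑ r, star (f r) • P r) * P n = star (f n) • P n := by
    rw [Finset.sum_mul, Finset.sum_eq_single n]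
    · rw [smul_mul_assoc, hPidem]
    · intro r _ hrn; rw [smul_mul_assoc, hPorth r n hrn, smul_zero]
    · exact fun h => absurd (Finset.mem_univ n) h
  have h2 : P n * (∑ r, f r • P r) = f n • P n := by
    rw [Finset.mul_sum, Finset.sum_eq_single n]
    · rw [mul_smul_comm, hPidem]
    · intro r _ hrn; rw [mul_smul_comm, hPorth n r (Ne.symm hrn), smul_zero]
    · exact fun h => absurd (Finset.mem_univ n) h
  rw [hconjT, mul_assoc, h1, mul_smul_comm, trace_smul, smul_eq_mul,
    Matrix.trace_mul_cycle, h2, smul_mul_assoc, trace_smul,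
    smul_eq_mul, trace_mul_comm]
  ring

lemma trace_proj_total
    (hPherm : ∀ r, (P r).IsHermitian)
    (hPorth : ∀ r s, r ≠ s → P r * P s = 0)
    (hPidem : ∀ r, P r * P r = P r)
    (hPsum : ∑ r, P r = 1)
    (ρ0 : Matrix (Fin N) (Fin N) ℂ) (f : Fin D → ℂ) :
    ((∑ r, f r • P r) * ρ0 * (∑ r, f r • P r)ᴴ).trace
      = ∑ m, f m * star (f m) * (ρ0 * P m).trace := by
  conv_lhs => rw [← mul_one ((∑ r, f r • P r) * ρ0 * (∑ r, f r • P r)ᴴ), ← hPsum,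
    Finset.mul_sum]
  rw [trace_sum]
  exact Finset.sum_congr rfl fun m _ => trace_proj_mul P hPherm hPorth hPidem ρ0 f m

lemma trace_nonneg_of_psd {M : Matrix (Fin N) (Fin N) ℂ} (hM : M.PosSemidef) :
    0 ≤ M.trace := by
  rw [Matrix.trace]
  apply Finset.sum_nonneg
  intro i _
  exact hM.diag_nonneg

end Aux

/-- Born rule: the state collapses to the energy level `Eₙ` with probability
`tr(ρ₀ Pₙ)`. -/
theorem born_rule_for_collapse
    {Ω : Type*} [MeasureSpace Ω] (hP : IsProbabilityMeasure (ℙ : Measure Ω))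
    (N : ℕ) (hN : 1 ≤ N) (σ ℏ : ℝ) (hσ : 0 < σ) (hℏ : 0 < ℏ)
    (Hhat : Matrix (Fin N) (Fin N) ℂ) (hHherm : Hhat.IsHermitian)
    (D : ℕ) (hD : 1 ≤ D) (E : Fin D → ℝ) (hE : Function.Injective E)
    (P : Fin D → Matrix (Fin N) (Fin N) ℂ)
    (hPherm : ∀ r, (P r).IsHermitian)
    (hPorth : ∀ r s, r ≠ s → P r * P s = 0)
    (hPidem : ∀ r, P r * P r = P r)
    (hPsum : ∑ r, P r = 1)
    (hHspec : Hhat = ∑ r, (E r : ℂ) • P r)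
    (ρ0 : Matrix (Fin N) (Fin N) ℂ) (hρ0 : ρ0.PosSemidef) (hρ0tr : ρ0.trace = 1)
    (K : ℝ → ℝ → Matrix (Fin N) (Fin N) ℂ)
    (hK : ∀ t x, K t x = NormedSpace.exp
      ((-Complex.I * ((ℏ⁻¹ * t : ℝ) : ℂ)) • Hhat
        + ((σ / 2 * x : ℝ) : ℂ) • Hhat - ((σ ^ 2 / 4 * t : ℝ) : ℂ) • Hhat ^ 2))
    (Λ : ℝ → ℝ → ℂ) (hΛ : ∀ t x, Λ t x = (K t x * ρ0 * (K t x)ᴴ).trace)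
    (ρt : ℝ → ℝ → Matrix (Fin N) (Fin N) ℂ)
    (hρt : ∀ t x, ρt t x = (Λ t x)⁻¹ • (K t x * ρ0 * (K t x)ᴴ))
    (H : Ω → ℝ) (hH : Measurable H) (hHval : ∀ ω, ∃ r, H ω = E r)
    (hHlaw : ∀ r, ((ℙ : Measure Ω) {ω | H ω = E r}).toReal = ((ρ0 * P r).trace).re)
    (B : ℝ → Ω → ℝ)
    (hB : ∀ᵐ ω ∂(ℙ : Measure Ω), Tendsto (fun t => B t ω / t) atTop (nhds 0))
    (ξ : ℝ → Ω → ℝ) (hξ : ∀ t ω, ξ t ω = σ * t * H ω + B t ω)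
    (n : Fin D) :
    ((ℙ : Measure Ω) {ω | Tendsto (fun t => ((ρt t (ξ t ω) * P n).trace).re)
        atTop (nhds 1)}).toReal
      = ((ρ0 * P n).trace).re := by
  classical
  -- the Born weights
  obtain ⟨p, hpdef⟩ : ∃ p : Fin D → ℝ, ∀ r, p r = ((ρ0 * P r).trace).re :=
    ⟨_, fun _ => rfl⟩
  have htr_nonneg : ∀ r, 0 ≤ (ρ0 * P r).trace := by
    intro r
    have heq : (ρ0 * P r).trace = (P r * ρ0 * (P r)ᴴ).trace := by
      rw [(hPherm r).eq, Matrix.trace_mul_cycle, hPidem, trace_mul_comm]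
    rw [heq]
    exact trace_nonneg_of_psd (hρ0.mul_mul_conjTranspose_same (P r))
  have hp_c : ∀ r, (ρ0 * P r).trace = ((p r : ℝ) : ℂ) := by
    intro r
    obtain ⟨h1, h2⟩ := Complex.nonneg_iff.mp (htr_nonneg r)
    rw [hpdef r]
    exact Complex.ext rfl (by simpa using h2.symm)
  have hp_nonneg : ∀ r, 0 ≤ p r := fun r => by
    rw [hpdef r]; exact (Complex.nonneg_iff.mp (htr_nonneg r)).1
  have hp_sum : ∑ r, p r = 1 := by
    have h1 : ∑ r, (ρ0 * P r).trace = 1 := by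
      rw [← trace_sum, ← Finset.mul_sum, hPsum, mul_one, hρ0tr]
    have h2 := congrArg Complex.re h1
    simp only [Complex.re_sum] at h2
    rw [Finset.sum_congr rfl fun r _ => hpdef r]
    simpa using h2
  -- explicit form of K
  obtain ⟨c, hcdef⟩ : ∃ c : ℝ → ℝ → Fin D → ℂ, ∀ t x r, c t x r =
      (-Complex.I * ((ℏ⁻¹ * t : ℝ) : ℂ) + ((σ / 2 * x : ℝ) : ℂ)) * (E r : ℂ)
        - ((σ ^ 2 / 4 * t : ℝ) : ℂ) * (E r : ℂ) ^ 2 :=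
    ⟨_, fun _ _ _ => rfl⟩
  have hK2 : ∀ t x, K t x = ∑ r, Complex.exp (c t x r) • P r := by
    intro t x
    rw [hK]
    have harg : (-Complex.I * ((ℏ⁻¹ * t : ℝ) : ℂ)) • Hhat
        + ((σ / 2 * x : ℝ) : ℂ) • Hhat - ((σ ^ 2 / 4 * t : ℝ) : ℂ) • Hhat ^ 2
        = ∑ r, c t x r • P r := by
      rw [hHspec, sum_smul_proj_pow P hPorth hPidem hPsum _ 2,
        Finset.smul_sum, Finset.smul_sum, Finset.smul_sum,
        ← Finset.sum_add_distrib, ← Finset.sum_sub_distrib]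
      refine Finset.sum_congr rfl fun r _ => ?_
      rw [smul_smul, smul_smul, smul_smul, ← add_smul, ← sub_smul, hcdef]
      congr 1
      ring
    rw [harg, exp_sum_smul_proj P hPorth hPidem hPsum]
  -- weights
  obtain ⟨w, hwdef⟩ : ∃ w : ℝ → ℝ → Fin D → ℝ, ∀ t x r, w t x r =
      Real.exp (σ * x * E r - σ ^ 2 / 2 * t * E r ^ 2) :=
    ⟨_, fun _ _ _ => rfl⟩
  have hfsf : ∀ t x r, Complex.exp (c t x r) * star (Complex.exp (c t x r))
      = ((w t x r : ℝ) : ℂ) := by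
    intro t x r
    rw [Complex.star_def, ← Complex.exp_conj, ← Complex.exp_add]
    rw [hwdef t x r, Complex.ofReal_exp]
    congr 1
    rw [hcdef]
    simp only [map_sub, map_add, _root_.map_mul, map_pow, map_neg, Complex.conj_ofReal,
      Complex.conj_I]
    push_cast
    ring
  have hNum : ∀ t x m, (K t x * ρ0 * (K t x)ᴴ * P m).trace = ((w t x m * p m : ℝ) : ℂ) := by
    intro t x m
    rw [hK2 t x, trace_proj_mul P hPherm hPorth hPidem ρ0 _ m, hfsf, hp_c m,
      ← Complex.ofReal_mul]
  have hΛ2 : ∀ t x, Λ t x = ((∑ r, w t x r * p r : ℝ) : ℂ) := by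
    intro t x
    rw [hΛ, hK2 t x, trace_proj_total P hPherm hPorth hPidem hPsum ρ0, Complex.ofReal_sum]
    refine Finset.sum_congr rfl fun r _ => ?_
    rw [hfsf, hp_c r, ← Complex.ofReal_mul]
  have hΛpos : ∀ t x, 0 < ∑ r, w t x r * p r := by
    intro t x
    obtain ⟨r, hr⟩ := Finset.exists_ne_zero_of_sum_ne_zero (s := Finset.univ)
      (f := p) (by rw [hp_sum]; norm_num)
    refine Finset.sum_pos'
      (fun i _ => mul_nonneg (by rw [hwdef]; exact (Real.exp_pos _).le) (hp_nonneg i))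
      ⟨r, Finset.mem_univ r, mul_pos (by rw [hwdef]; exact Real.exp_pos _)
        (lt_of_le_of_ne (hp_nonneg r) (Ne.symm hr.2))⟩
  have hkey : ∀ t x, ((ρt t x * P n).trace).re
      = (∑ r, w t x r * p r)⁻¹ * (w t x n * p n) := by
    intro t x
    rw [hρt, smul_mul_assoc, trace_smul, hΛ2, hNum, smul_eq_mul,
      ← Complex.ofReal_inv, ← Complex.ofReal_mul, Complex.ofReal_re]
  -- pointwise claim
  have claim : ∀ ω : Ω, (∀ m, H ω = E m → 0 < p m) →
      Tendsto (fun t => B t ω / t) atTop (nhds 0) →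
      (Tendsto (fun t => ((ρt t (ξ t ω) * P n).trace).re) atTop (nhds 1) ↔ H ω = E n) := by
    intro ω hpos hBω
    obtain ⟨m, hm⟩ := hHval ω
    have hpm : 0 < p m := hpos m hm
    obtain ⟨a, hadef⟩ : ∃ a : ℝ → Fin D → ℝ, ∀ t r, a t r =
        Real.exp (-(σ ^ 2 / 2) * (E r - E m) ^ 2 * t + σ * B t ω * (E r - E m)) :=
      ⟨_, fun _ _ => rfl⟩
    have hwa : ∀ t r, w t (ξ t ω) r = a t r * w t (ξ t ω) m := by
      intro t r
      rw [hadef t r, hwdef t (ξ t ω) r, hwdef t (ξ t ω) m, ← Real.exp_add]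
      congr 1
      rw [hξ t ω, hm]
      ring
    have heq : ∀ t, ((ρt t (ξ t ω) * P n).trace).re
        = (∑ r, a t r * p r)⁻¹ * (a t n * p n) := by
      intro t
      rw [hkey]
      have hwm : w t (ξ t ω) m ≠ 0 := by
        rw [hwdef]; exact (Real.exp_pos _).ne'
      have hsum : ∑ r, w t (ξ t ω) r * p r = (∑ r, a t r * p r) * w t (ξ t ω) m := by
        rw [Finset.sum_mul]
        exact Finset.sum_congr rfl fun r _ => by rw [hwa]; ring
      rw [hsum, hwa t n]
      field_simp
    have ham : ∀ t, a t m = 1 := by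
      intro t
      rw [hadef t m]
      simp
    have halim : ∀ r, r ≠ m → Tendsto (fun t => a t r) atTop (nhds 0) := by
      intro r hr
      have hEne : E r - E m ≠ 0 := sub_ne_zero.mpr (fun h => hr (hE h))
      simp only [hadef]
      have hc : -(σ ^ 2 / 2) * (E r - E m) ^ 2 < 0 := by
        have h1 : 0 < σ ^ 2 / 2 * (E r - E m) ^ 2 := by positivity
        linarith
      have h2 : Tendsto (fun t => σ * (B t ω / t) * (E r - E m)) atTop (nhds 0) := by
        have := (hBω.const_mul σ).mul_const (E r - E m)
        simpa using this
      have hinner : Tendsto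
          (fun t => -(σ ^ 2 / 2) * (E r - E m) ^ 2 + σ * (B t ω / t) * (E r - E m))
          atTop (nhds (-(σ ^ 2 / 2) * (E r - E m) ^ 2)) := by
        simpa using tendsto_const_nhds.add h2
      have hmul : Tendsto
          (fun t : ℝ => t * (-(σ ^ 2 / 2) * (E r - E m) ^ 2 + σ * (B t ω / t) * (E r - E m)))
          atTop atBot := Filter.Tendsto.atTop_mul_neg hc tendsto_id hinner
      have hcongr : (fun t : ℝ => t * (-(σ ^ 2 / 2) * (E r - E m) ^ 2
            + σ * (B t ω / t) * (E r - E m)))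
          =ᶠ[atTop] fun t => -(σ ^ 2 / 2) * (E r - E m) ^ 2 * t + σ * B t ω * (E r - E m) := by
        filter_upwards [eventually_gt_atTop (0:ℝ)] with t ht
        field_simp
      have : Tendsto (fun t : ℝ => -(σ ^ 2 / 2) * (E r - E m) ^ 2 * t
          + σ * B t ω * (E r - E m)) atTop atBot := hmul.congr' hcongr
      exact Real.tendsto_exp_atBot.comp this
    have hsumlim : Tendsto (fun t => ∑ r, a t r * p r) atTop (nhds (p m)) := by
      have h1 : Tendsto (fun t => ∑ r, a t r * p r) atTop
          (nhds (∑ r, (if r = m then p m else 0))) := by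
        apply tendsto_finset_sum
        intro r _
        by_cases hr : r = m
        · subst hr
          simp only [ham, one_mul, if_pos rfl]
          exact tendsto_const_nhds
        · simpa [hr] using (halim r hr).mul_const (p r)
      simpa using h1
    have hnumlim : Tendsto (fun t => a t n * p n) atTop (nhds (if n = m then p n else 0)) := by
      by_cases h : n = m
      · subst h
        simp only [ham, one_mul, if_pos rfl]
        exact tendsto_const_nhds
      · simpa [h] using (halim n h).mul_const (p n)
    have hlim : Tendsto (fun t => ((ρt t (ξ t ω) * P n).trace).re) atTop
        (nhds (if n = m then 1 else 0)) := by
      have h1 := (hsumlim.inv₀ hpm.ne').mul hnumlim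
      have h2 : (p m)⁻¹ * (if n = m then p n else 0) = (if n = m then 1 else 0) := by
        split_ifs with h
        · subst h; exact inv_mul_cancel₀ hpm.ne'
        · simp
      rw [h2] at h1
      exact h1.congr fun t => (heq t).symm
    constructor
    · intro hT
      by_cases h : n = m
      · rw [h]; exact hm
      · have h1 := tendsto_nhds_unique hT hlim
        rw [if_neg h] at h1
        norm_num at h1
    · intro hn
      have h : n = m := hE (hn ▸ hm)
      rwa [if_pos h] at hlim
  -- measure-theoretic conclusion
  have hbad : ∀ᵐ ω ∂(ℙ : Measure Ω), ∀ m, H ω = E m → 0 < p m := by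
    rw [ae_all_iff]
    intro m
    by_cases hpm : p m = 0
    · have h0 : (ℙ : Measure Ω) {ω | H ω = E m} = 0 := by
        have h1 : ((ℙ : Measure Ω) {ω | H ω = E m}).toReal = 0 := by
          rw [hHlaw m, ← hpdef m]; exact hpm
        rcases (ENNReal.toReal_eq_zero_iff _).mp h1 with h | h
        · exact h
        · exact absurd h (measure_ne_top _ _)
      have h2 : ∀ᵐ ω ∂(ℙ : Measure Ω), ¬ (H ω = E m) := by
        rw [ae_iff]
        simpa using h0
      filter_upwards [h2] with ω hω
      exact fun h => absurd h hω
    · have : 0 < p m := lt_of_le_of_ne (hp_nonneg m) (Ne.symm hpm)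
      filter_upwards with ω _
      exact this
  have hAE : {ω | Tendsto (fun t => ((ρt t (ξ t ω) * P n).trace).re) atTop (nhds 1)}
      =ᵐ[(ℙ : Measure Ω)] {ω | H ω = E n} := by
    rw [Filter.eventuallyEq_set]
    filter_upwards [hbad, hB] with ω h1 h2
    exact claim ω h1 h2
  rw [measure_congr hAE, hHlaw n]
end

section
/- Assume the spectral setup and set p_r := Re(tr(ρ_0 P_r)). Then for every t ≥ 0, x ∈ ℝ and index n, the diagonal block of the normalized state satisfies P_n ρ_t(x) P_n = [ exp(σ E_n x − (σ²/2) E_n² t) / Σ_{r=1}^D p_r exp(σ E_r x − (σ²/2) E_r² t) ] · (P_n ρ_0 P_n). -/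
open Matrix
open scoped ComplexOrder

lemma mul_exp_of_pow {𝔸 : Type*} [NormedRing 𝔸] [NormedAlgebra ℂ 𝔸] [CompleteSpace 𝔸]
    (p a : 𝔸) (c : ℂ) (h : ∀ k : ℕ, p * a ^ k = c ^ k • p) :
    p * NormedSpace.exp a = Complex.exp c • p := by
  simp only [Complex.exp_eq_exp_ℂ, NormedSpace.exp_eq_tsum (𝕂 := ℂ)]
  rw [← (NormedSpace.expSeries_summable' (𝕂 := ℂ) a).tsum_mul_left p,
    ← Summable.tsum_smul_const (NormedSpace.expSeries_summable' (𝕂 := ℂ) (𝔸 := ℂ) c) p]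
  exact tsum_congr fun k => by rw [mul_smul_comm, h k, smul_smul, smul_eq_mul]

lemma matrix_mul_exp_of_pow {n : ℕ} (p a : Matrix (Fin n) (Fin n) ℂ) (c : ℂ)
    (h : ∀ k : ℕ, p * a ^ k = c ^ k • p) :
    p * NormedSpace.exp a = Complex.exp c • p := by
  letI : SeminormedRing (Matrix (Fin n) (Fin n) ℂ) := Matrix.linftyOpSemiNormedRing
  letI : NormedRing (Matrix (Fin n) (Fin n) ℂ) := Matrix.linftyOpNormedRing
  letI : NormedAlgebra ℂ (Matrix (Fin n) (Fin n) ℂ) := Matrix.linftyOpNormedAlgebra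
  exact mul_exp_of_pow p a c h

/-- Spectral setup: the diagonal blocks of the normalized state are scalar multiples
of the corresponding blocks of the initial state. -/
theorem diagonal_block_of_normalized_state
    (N : ℕ) (hN : 1 ≤ N) (σ ℏ : ℝ) (hσ : 0 < σ) (hℏ : 0 < ℏ)
    (Hhat : Matrix (Fin N) (Fin N) ℂ) (hHherm : Hhat.IsHermitian)
    (D : ℕ) (hD : 1 ≤ D) (E : Fin D → ℝ) (hE : Function.Injective E)
    (P : Fin D → Matrix (Fin N) (Fin N) ℂ)
    (hPherm : ∀ r, (P r).IsHermitian)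
    (hPorth : ∀ r s, r ≠ s → P r * P s = 0)
    (hPidem : ∀ r, P r * P r = P r)
    (hPsum : ∑ r, P r = 1)
    (hHspec : Hhat = ∑ r, (E r : ℂ) • P r)
    (ρ0 : Matrix (Fin N) (Fin N) ℂ) (hρ0 : ρ0.PosSemidef) (hρ0tr : ρ0.trace = 1)
    (K : ℝ → ℝ → Matrix (Fin N) (Fin N) ℂ)
    (hK : ∀ t x, K t x = NormedSpace.exp
      ((-Complex.I * ((ℏ⁻¹ * t : ℝ) : ℂ)) • Hhat
        + ((σ / 2 * x : ℝ) : ℂ) • Hhat - ((σ ^ 2 / 4 * t : ℝ) : ℂ) • Hhat ^ 2))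
    (Λ : ℝ → ℝ → ℂ) (hΛ : ∀ t x, Λ t x = (K t x * ρ0 * (K t x)ᴴ).trace)
    (ρt : ℝ → ℝ → Matrix (Fin N) (Fin N) ℂ)
    (hρt : ∀ t x, ρt t x = (Λ t x)⁻¹ • (K t x * ρ0 * (K t x)ᴴ))
    (p : Fin D → ℝ) (hp : ∀ r, p r = ((ρ0 * P r).trace).re) :
    ∀ t ≥ (0 : ℝ), ∀ x : ℝ, ∀ n : Fin D,
      P n * ρt t x * P n
        = (Real.exp (σ * E n * x - σ ^ 2 / 2 * (E n) ^ 2 * t) /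
            ∑ r, p r * Real.exp (σ * E r * x - σ ^ 2 / 2 * (E r) ^ 2 * t))
          • (P n * ρ0 * P n) := by
  intro t ht x n
  set A : Matrix (Fin N) (Fin N) ℂ :=
    (-Complex.I * ((ℏ⁻¹ * t : ℝ) : ℂ)) • Hhat
      + ((σ / 2 * x : ℝ) : ℂ) • Hhat - ((σ ^ 2 / 4 * t : ℝ) : ℂ) • Hhat ^ 2 with hAdef
  set c : Fin D → ℂ := fun r =>
    -Complex.I * ((ℏ⁻¹ * t : ℝ) : ℂ) * (E r) + ((σ / 2 * x : ℝ) : ℂ) * E r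
      - ((σ ^ 2 / 4 * t : ℝ) : ℂ) * (E r) ^ 2 with hcdef
  set w : Fin D → ℝ := fun r => σ * E r * x - σ ^ 2 / 2 * (E r) ^ 2 * t with hwdef
  have hH2 : Hhat ^ 2 = ∑ r, ((E r : ℂ) ^ 2) • P r := by
    rw [hHspec, sq, Finset.sum_mul_sum]
    refine Finset.sum_congr rfl fun r _ => ?_
    rw [Finset.sum_eq_single r]
    · rw [smul_mul_smul_comm, hPidem, sq]
    · intro s _ hs
      rw [smul_mul_smul_comm, hPorth r s (Ne.symm hs), smul_zero]
    · simp
  have hA : A = ∑ r, c r • P r := by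
    rw [hAdef, hH2, hHspec, Finset.smul_sum, Finset.smul_sum, Finset.smul_sum,
      ← Finset.sum_add_distrib, ← Finset.sum_sub_distrib]
    refine Finset.sum_congr rfl fun r _ => ?_
    rw [smul_smul, smul_smul, smul_smul, ← add_smul, ← sub_smul, hcdef]
  have hPA : ∀ r, P r * A = c r • P r := by
    intro r
    rw [hA, Finset.mul_sum, Finset.sum_eq_single r]
    · rw [mul_smul_comm, hPidem]
    · intro s _ hs
      rw [mul_smul_comm, hPorth r s (Ne.symm hs), smul_zero]
    · simp
  have hPAk : ∀ r, ∀ k : ℕ, P r * A ^ k = (c r) ^ k • P r := by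
    intro r k
    induction k with
    | zero => simp
    | succ k ih =>
      rw [pow_succ, ← mul_assoc, ih, smul_mul_assoc, hPA, smul_smul, ← pow_succ]
  have hPK : ∀ r, P r * K t x = Complex.exp (c r) • P r := by
    intro r
    rw [hK, ← hAdef]
    exact matrix_mul_exp_of_pow _ _ _ (hPAk r)
  have hKP : ∀ r, (K t x)ᴴ * P r = (starRingEnd ℂ) (Complex.exp (c r)) • P r := by
    intro r
    have h := congrArg conjTranspose (hPK r)
    rwa [conjTranspose_mul, conjTranspose_smul, (hPherm r).eq] at h
  have hce : ∀ r, Complex.exp (c r) * (starRingEnd ℂ) (Complex.exp (c r))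
      = ((Real.exp (w r) : ℝ) : ℂ) := by
    intro r
    rw [← Complex.exp_conj, ← Complex.exp_add, Complex.ofReal_exp]
    congr 1
    simp only [hcdef, hwdef, map_sub, map_add, _root_.map_mul, map_neg, Complex.conj_I,
      Complex.conj_ofReal, map_pow]
    push_cast
    ring
  have hblock : ∀ r, P r * (K t x * ρ0 * (K t x)ᴴ) * P r
      = ((Real.exp (w r) : ℝ) : ℂ) • (P r * ρ0 * P r) := by
    intro r
    have e1 : P r * (K t x * ρ0 * (K t x)ᴴ) * P r
        = (P r * K t x) * ρ0 * ((K t x)ᴴ * P r) := by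
      simp only [mul_assoc]
    rw [e1, hPK r, hKP r, smul_mul_assoc, smul_mul_assoc, mul_smul_comm, smul_smul, hce r]
  have htrreal : ∀ r, (ρ0 * P r).trace = ((p r : ℝ) : ℂ) := by
    intro r
    have h1 : star ((ρ0 * P r).trace) = (ρ0 * P r).trace := by
      rw [← Matrix.trace_conjTranspose, conjTranspose_mul, (hPherm r).eq, hρ0.1.eq,
        Matrix.trace_mul_comm]
    rw [hp r]
    exact (Complex.conj_eq_iff_re.mp h1).symm
  have hΛS : Λ t x = ((∑ r, p r * Real.exp (w r) : ℝ) : ℂ) := by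
    rw [hΛ]
    have e1 : (K t x * ρ0 * (K t x)ᴴ).trace
        = ∑ r, (P r * (K t x * ρ0 * (K t x)ᴴ)).trace := by
      rw [← Matrix.trace_sum, ← Finset.sum_mul, hPsum, one_mul]
    rw [e1]
    have e2 : ∀ r, (P r * (K t x * ρ0 * (K t x)ᴴ)).trace
        = ((p r * Real.exp (w r) : ℝ) : ℂ) := by
      intro r
      have e3 : (P r * (K t x * ρ0 * (K t x)ᴴ) * P r).trace
          = (P r * (K t x * ρ0 * (K t x)ᴴ)).trace := by
        rw [Matrix.trace_mul_comm, ← mul_assoc, hPidem]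
      have e4 : (P r * ρ0 * P r).trace = (ρ0 * P r).trace := by
        rw [Matrix.trace_mul_comm, ← mul_assoc, hPidem, Matrix.trace_mul_comm]
      rw [← e3, hblock r, Matrix.trace_smul, e4, htrreal r, smul_eq_mul]
      push_cast
      ring
    simp only [e2]
    norm_cast
  have hrw1 : Real.exp (σ * E n * x - σ ^ 2 / 2 * (E n) ^ 2 * t) = Real.exp (w n) := rfl
  have hrw2 : (∑ r, p r * Real.exp (σ * E r * x - σ ^ 2 / 2 * (E r) ^ 2 * t))
      = ∑ r, p r * Real.exp (w r) := rfl
  rw [hrw1, hrw2, hρt, hΛS, mul_smul_comm, smul_mul_assoc, hblock n, smul_smul]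
  have hcast : ∀ (a : ℝ) (M : Matrix (Fin N) (Fin N) ℂ), a • M = ((a : ℂ)) • M := by
    intro a M
    ext i j
    simp [Complex.real_smul]
  rw [hcast]
  congr 1
  push_cast
  ring
end

section
/- Under the single-time filtering setup, for any indices n, m, define Φ_{nm}(t, x) := exp((σ/2)(E_n + E_m) x − (σ²/4)(E_n² + E_m²) t) / Σ_{r=1}^D p_r exp(σ E_r x − (σ²/2) E_r² t). Then E[ Φ_{nm}(t, ξ) ] = exp(−(σ²/8)(E_n − E_m)² t). -/
namespace DecoAux
open MeasureTheory ProbabilityTheory Real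

lemma pdf_shift {t : ℝ} (ht : 0 < t) (c x : ℝ) :
    gaussianPDFReal c t.toNNReal x
      = Real.exp ((2*c*x - c^2) / (2*t)) * gaussianPDFReal 0 t.toNNReal x := by
  have hv : ((t.toNNReal : ℝ)) = t := Real.coe_toNNReal t ht.le
  simp only [gaussianPDFReal, hv, sub_zero]
  have h : rexp (-(x - c)^2/(2*t)) = rexp (-x^2/(2*t)) * rexp ((2*c*x - c^2)/(2*t)) := by
    rw [← Real.exp_add]; congr 1; field_simp; ring
  rw [h]; ring

lemma exp_pdf_eq {t : ℝ} (ht : 0 < t) (a b : ℝ) :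
    (fun x => Real.exp (a*x + b) * gaussianPDFReal 0 t.toNNReal x)
      = fun x => Real.exp (b + a^2*t/2) * gaussianPDFReal (a*t) t.toNNReal x := by
  funext x
  rw [pdf_shift ht (a*t) x, ← mul_assoc, ← Real.exp_add]
  have h2 : a*x + b = b + a^2*t/2 + (2*(a*t)*x - (a*t)^2) / (2*t) := by
    field_simp; ring
  rw [h2, Real.exp_add]

lemma exp_pdf_integrable {t : ℝ} (ht : 0 < t) (a b : ℝ) :
    Integrable (fun x => Real.exp (a*x + b) * gaussianPDFReal 0 t.toNNReal x) := by
  rw [exp_pdf_eq ht a b]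
  exact (integrable_gaussianPDFReal _ _).const_mul _

lemma exp_pdf_integral {t : ℝ} (ht : 0 < t) (a b : ℝ) :
    ∫ x, Real.exp (a*x + b) * gaussianPDFReal 0 t.toNNReal x
      = Real.exp (b + a^2*t/2) := by
  rw [exp_pdf_eq ht a b, integral_const_mul,
    integral_gaussianPDFReal_eq_one _ (by simp [Real.toNNReal_pos.mpr ht, (Real.toNNReal_pos.mpr ht).ne']), mul_one]

lemma gaussian_integral_eq {t : ℝ} (ht : 0 < t) (g : ℝ → ℝ) :
    ∫ x, g x ∂(gaussianReal 0 t.toNNReal)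
      = ∫ x, gaussianPDFReal 0 t.toNNReal x * g x := by
  have hv : t.toNNReal ≠ 0 := (Real.toNNReal_pos.mpr ht).ne'
  rw [gaussianReal_of_var_ne_zero 0 hv]
  have : (gaussianPDF 0 t.toNNReal) = fun x => ((gaussianPDFReal 0 t.toNNReal x).toNNReal : ENNReal) := by
    funext x; simp [gaussianPDF, ENNReal.ofReal]
  rw [this, integral_withDensity_eq_integral_smul
    ((measurable_gaussianPDFReal 0 t.toNNReal).real_toNNReal)]
  congr 1; funext x
  simp [NNReal.smul_def, Real.coe_toNNReal _ (gaussianPDFReal_nonneg 0 t.toNNReal x)]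

lemma gaussian_integrable_iff {t : ℝ} (ht : 0 < t) (g : ℝ → ℝ) :
    Integrable g (gaussianReal 0 t.toNNReal)
      ↔ Integrable (fun x => g x * gaussianPDFReal 0 t.toNNReal x) := by
  have hv : t.toNNReal ≠ 0 := (Real.toNNReal_pos.mpr ht).ne'
  rw [gaussianReal_of_var_ne_zero 0 hv]
  rw [integrable_withDensity_iff (measurable_gaussianPDF 0 t.toNNReal)
    (ae_of_all _ fun x => ENNReal.ofReal_lt_top)]
  simp only [gaussianPDF, ENNReal.toReal_ofReal (gaussianPDFReal_nonneg 0 t.toNNReal _)]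

end DecoAux

open MeasureTheory ProbabilityTheory Filter

/-- Single-time filtering: the expectation of the decoherence factor `Φ_{nm}(t, ξ)`
equals `exp(−σ²(Eₙ−Eₘ)²t/8)`. -/
theorem expectation_of_decoherence_factor {Ω : Type*} [MeasureSpace Ω]
    (hP : IsProbabilityMeasure (ℙ : Measure Ω))
    (D : ℕ) (hD : 1 ≤ D) (E : Fin D → ℝ) (hE : Function.Injective E)
    (σ t : ℝ) (hσ : 0 < σ) (ht : 0 < t)
    (H B : Ω → ℝ) (hH : Measurable H) (hB : Measurable B)
    (hHval : ∀ ω, ∃ r, H ω = E r)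
    (hBlaw : Measure.map B (ℙ : Measure Ω) = gaussianReal 0 t.toNNReal)
    (hindep : IndepFun H B (ℙ : Measure Ω))
    (p : Fin D → ℝ) (hp : ∀ r, p r = ((ℙ : Measure Ω) {ω | H ω = E r}).toReal)
    (ξ : Ω → ℝ) (hξ : ξ = fun ω => σ * t * H ω + B ω)
    (Φ : Fin D → Fin D → ℝ → ℝ → ℝ)
    (hΦ : ∀ n m s x, Φ n m s x =
      Real.exp (σ / 2 * (E n + E m) * x - σ ^ 2 / 4 * ((E n) ^ 2 + (E m) ^ 2) * s) /
        ∑ r, p r * Real.exp (σ * E r * x - σ ^ 2 / 2 * (E r) ^ 2 * s))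
    (n m : Fin D) :
    ∫ ω, Φ n m t (ξ ω) ∂(ℙ : Measure Ω)
      = Real.exp (-(σ ^ 2 / 8) * (E n - E m) ^ 2 * t) := by
  simp only [hξ]
  set v := t.toNNReal with hvdef
  set g : ℝ → ℝ := Φ n m t with hgdef
  set num : ℝ → ℝ := fun x =>
    Real.exp (σ / 2 * (E n + E m) * x - σ ^ 2 / 4 * ((E n) ^ 2 + (E m) ^ 2) * t) with hnumdef
  set den : ℝ → ℝ := fun x =>
    ∑ r, p r * Real.exp (σ * E r * x - σ ^ 2 / 2 * (E r) ^ 2 * t) with hdendef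
  have hg : ∀ x, g x = num x / den x := fun x => hΦ n m t x
  -- basic facts about p
  have hA : ∀ r, MeasurableSet {ω | H ω = E r} := fun r => hH (measurableSet_singleton (E r))
  have hpnn : ∀ r, 0 ≤ p r := fun r => (hp r) ▸ ENNReal.toReal_nonneg
  have hpsum : (∑ r, p r) = 1 := by
    have hdisj : Pairwise (Function.onFun Disjoint fun r => {ω | H ω = E r}) := by
      intro i j hij
      rw [Function.onFun, Set.disjoint_left]
      intro ω hi hj
      exact hij (hE ((hi : H ω = E i).symm.trans (hj : H ω = E j)))
    have hunion : (⋃ r, {ω | H ω = E r}) = Set.univ := by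
      ext ω
      simp only [Set.mem_iUnion, Set.mem_univ, iff_true, Set.mem_setOf_eq]
      exact hHval ω
    have hmu := measure_iUnion (μ := (ℙ : Measure Ω)) hdisj hA
    rw [hunion, measure_univ, tsum_fintype] at hmu
    have h2 : (∑ r, p r) = (∑ r, (ℙ : Measure Ω) {ω | H ω = E r}).toReal := by
      rw [ENNReal.toReal_sum (fun r _ => measure_ne_top _ _)]
      exact Finset.sum_congr rfl fun r _ => hp r
    rw [h2, ← hmu]
    simp
  obtain ⟨q, hq0⟩ : ∃ q, 0 < p q := by
    by_contra h
    push_neg at h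
    have : (∑ r, p r) ≤ 0 := Finset.sum_nonpos fun r _ => h r
    linarith
  -- positivity of denominator
  have hdenpos : ∀ x, 0 < den x := by
    intro x
    have h1 : p q * Real.exp (σ * E q * x - σ ^ 2 / 2 * (E q) ^ 2 * t) ≤ den x :=
      Finset.single_le_sum (f := fun r =>
          p r * Real.exp (σ * E r * x - σ ^ 2 / 2 * (E r) ^ 2 * t))
        (fun r _ => mul_nonneg (hpnn r) (Real.exp_pos _).le) (Finset.mem_univ q)
    have h2 : 0 < p q * Real.exp (σ * E q * x - σ ^ 2 / 2 * (E q) ^ 2 * t) :=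
      mul_pos hq0 (Real.exp_pos _)
    linarith
  -- continuity of g
  have hnc : Continuous num := by
    apply Real.continuous_exp.comp; continuity
  have hdc : Continuous den := by
    apply continuous_finset_sum
    intro r _
    exact continuous_const.mul (Real.continuous_exp.comp (by continuity))
  have hgc : Continuous g := by
    have : g = fun x => num x / den x := funext hg
    rw [this]
    exact hnc.div hdc fun x => (hdenpos x).ne'
  -- the bound on g
  set a : ℝ := σ / 2 * (E n + E m) - σ * E q with hadef
  set b : ℝ := σ ^ 2 / 2 * (E q) ^ 2 * t - σ ^ 2 / 4 * ((E n) ^ 2 + (E m) ^ 2) * t with hbdef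
  have hgb : ∀ x, |g x| ≤ (p q)⁻¹ * Real.exp (a * x + b) := by
    intro x
    rw [hg x, abs_of_nonneg (div_nonneg (Real.exp_pos _).le (hdenpos x).le)]
    have h1 : p q * Real.exp (σ * E q * x - σ ^ 2 / 2 * (E q) ^ 2 * t) ≤ den x :=
      Finset.single_le_sum (f := fun r =>
          p r * Real.exp (σ * E r * x - σ ^ 2 / 2 * (E r) ^ 2 * t))
        (fun r _ => mul_nonneg (hpnn r) (Real.exp_pos _).le) (Finset.mem_univ q)
    have h2 : 0 < p q * Real.exp (σ * E q * x - σ ^ 2 / 2 * (E q) ^ 2 * t) :=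
      mul_pos hq0 (Real.exp_pos _)
    have h3 : num x / den x ≤ num x / (p q * Real.exp (σ * E q * x - σ ^ 2 / 2 * (E q) ^ 2 * t)) :=
      div_le_div_of_nonneg_left (Real.exp_pos _).le h2 h1
    refine h3.trans (le_of_eq ?_)
    rw [div_eq_iff h2.ne']
    rw [show (p q)⁻¹ * Real.exp (a * x + b) *
        (p q * Real.exp (σ * E q * x - σ ^ 2 / 2 * (E q) ^ 2 * t))
      = ((p q)⁻¹ * p q) * (Real.exp (a * x + b) *
        Real.exp (σ * E q * x - σ ^ 2 / 2 * (E q) ^ 2 * t)) from by ring,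
      inv_mul_cancel₀ hq0.ne', one_mul, ← Real.exp_add]
    show Real.exp _ = _
    congr 1
    ring
  -- integrability lemmas
  have hInt1 : ∀ c : ℝ, Integrable (fun x => g (c + x) * gaussianPDFReal 0 v x) := by
    intro c
    refine Integrable.mono'
      ((DecoAux.exp_pdf_integrable ht a (a * c + b)).const_mul (p q)⁻¹)
      (((hgc.comp (continuous_const.add continuous_id)).measurable.mul
        (measurable_gaussianPDFReal 0 v)).aestronglyMeasurable)
      (ae_of_all _ fun x => ?_)
    rw [Real.norm_eq_abs, abs_mul, abs_of_nonneg (gaussianPDFReal_nonneg 0 v x)]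
    calc |g (c + x)| * gaussianPDFReal 0 v x
        ≤ ((p q)⁻¹ * Real.exp (a * (c + x) + b)) * gaussianPDFReal 0 v x := by
          exact mul_le_mul_of_nonneg_right (hgb _) (gaussianPDFReal_nonneg 0 v x)
      _ = (p q)⁻¹ * (Real.exp (a * x + (a * c + b)) * gaussianPDFReal 0 v x) := by
          rw [show a * (c + x) + b = a * x + (a * c + b) from by ring]; ring
  have hInt2 : ∀ (α β : ℝ) (e : ℝ → ℝ), (∀ x, e x = α * x + β) →
      Integrable (fun x => g x * Real.exp (e x) * gaussianPDFReal 0 v x) := by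
    intro α β e he
    have he' : Measurable e := by
      have h0 : e = fun x => α * x + β := funext he
      rw [h0]; exact (measurable_const.mul measurable_id).add_const β
    refine Integrable.mono'
      ((DecoAux.exp_pdf_integrable ht (a + α) (b + β)).const_mul (p q)⁻¹)
      (((hgc.measurable.mul he'.exp).mul
        (measurable_gaussianPDFReal 0 v)).aestronglyMeasurable)
      (ae_of_all _ fun x => ?_)
    rw [Real.norm_eq_abs, abs_mul, abs_of_nonneg (gaussianPDFReal_nonneg 0 v x),
      abs_mul, abs_of_nonneg (Real.exp_pos (e x)).le]
    calc |g x| * Real.exp (e x) * gaussianPDFReal 0 v x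
        ≤ ((p q)⁻¹ * Real.exp (a * x + b)) * Real.exp (e x) * gaussianPDFReal 0 v x := by
          refine mul_le_mul_of_nonneg_right (mul_le_mul_of_nonneg_right (hgb _)
            (Real.exp_pos _).le) (gaussianPDFReal_nonneg 0 v x)
      _ = (p q)⁻¹ * (Real.exp ((a + α) * x + (b + β)) * gaussianPDFReal 0 v x) := by
          have hx : Real.exp (a * x + b) * Real.exp (α * x + β)
              = Real.exp ((a + α) * x + (b + β)) := by
            rw [← Real.exp_add]; congr 1; ring
          rw [he x]
          calc ((p q)⁻¹ * Real.exp (a * x + b)) * Real.exp (α * x + β) * gaussianPDFReal 0 v x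
              = (p q)⁻¹ * ((Real.exp (a * x + b) * Real.exp (α * x + β))
                  * gaussianPDFReal 0 v x) := by ring
            _ = _ := by rw [hx]
  -- transfer integrability/integral through B
  have hasm : ∀ c : ℝ, AEStronglyMeasurable (fun x => g (c + x))
      (Measure.map B (ℙ : Measure Ω)) :=
    fun c => (hgc.comp (continuous_const.add continuous_id)).aestronglyMeasurable
  have hintB : ∀ c : ℝ, Integrable (fun ω => g (c + B ω)) (ℙ : Measure Ω) := by
    intro c
    have h1 : Integrable (fun x => g (c + x)) (gaussianReal 0 v) := by
      rw [DecoAux.gaussian_integrable_iff ht]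
      exact hInt1 c
    rw [← hBlaw] at h1
    exact (integrable_map_measure (hasm c) hB.aemeasurable).mp h1
  have hmapB : ∀ c : ℝ, ∫ ω, g (c + B ω) ∂(ℙ : Measure Ω)
      = ∫ x, g (c + x) ∂(gaussianReal 0 v) := by
    intro c
    rw [← hBlaw]
    exact (integral_map hB.aemeasurable (hasm c)).symm
  -- step 1: pointwise decomposition
  have hpt : ∀ ω, g (σ * t * H ω + B ω)
      = ∑ r, ({ω' | H ω' = E r}).indicator (fun ω' => g (σ * t * E r + B ω')) ω := by
    intro ω
    obtain ⟨r0, hr0⟩ := hHval ω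
    rw [Finset.sum_eq_single r0]
    · simp only [Set.indicator_apply, Set.mem_setOf_eq, hr0, if_true]
    · intro r _ hr
      have hne : ¬ H ω = E r := fun hmem => hr (hE (hmem.symm.trans hr0))
      simp [Set.indicator_apply, Set.mem_setOf_eq, hne]
    · intro h; exact absurd (Finset.mem_univ r0) h
  -- step 2-3: split into sum and factor using independence
  have hsplit : ∫ ω, g (σ * t * H ω + B ω) ∂(ℙ : Measure Ω)
      = ∑ r : Fin D, p r * ∫ ω, g (σ * t * E r + B ω) ∂(ℙ : Measure Ω) := by
    rw [show (fun ω => g (σ * t * H ω + B ω))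
        = fun ω => ∑ r, ({ω' | H ω' = E r}).indicator
            (fun ω' => g (σ * t * E r + B ω')) ω from funext hpt]
    rw [integral_finset_sum _ fun r _ => (hintB (σ * t * E r)).indicator (hA r)]
    refine Finset.sum_congr rfl fun r _ => ?_
    have hind : ∀ ω, ({ω' | H ω' = E r}).indicator (fun ω' => g (σ * t * E r + B ω')) ω
        = ({E r} : Set ℝ).indicator (fun _ => (1 : ℝ)) (H ω) * g (σ * t * E r + B ω) := by
      intro ω
      by_cases h : H ω = E r
      · simp [Set.indicator_apply, Set.mem_setOf_eq, Set.mem_singleton_iff, h]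
      · simp [Set.indicator_apply, Set.mem_setOf_eq, Set.mem_singleton_iff, h]
    rw [show (fun ω => ({ω' | H ω' = E r}).indicator (fun ω' => g (σ * t * E r + B ω')) ω)
        = fun ω => ({E r} : Set ℝ).indicator (fun _ => (1 : ℝ)) (H ω)
            * g (σ * t * E r + B ω) from funext hind]
    have hφm : Measurable (({E r} : Set ℝ).indicator (fun _ => (1 : ℝ))) :=
      measurable_const.indicator (measurableSet_singleton _)
    have hψm : Measurable (fun x => g (σ * t * E r + x)) :=
      (hgc.comp (continuous_const.add continuous_id)).measurable
    have hi : IndepFun (fun ω => ({E r} : Set ℝ).indicator (fun _ => (1 : ℝ)) (H ω))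
        (fun ω => g (σ * t * E r + B ω)) (ℙ : Measure Ω) := hindep.comp hφm hψm
    have hmul := hi.integral_mul_eq_mul_integral ((hφm.comp hH).aestronglyMeasurable)
      ((hψm.comp hB).aestronglyMeasurable)
    rw [show (fun ω => ({E r} : Set ℝ).indicator (fun _ => (1 : ℝ)) (H ω)
        * g (σ * t * E r + B ω))
      = (fun ω => ({E r} : Set ℝ).indicator (fun _ => (1 : ℝ)) (H ω))
        * fun ω => g (σ * t * E r + B ω) from rfl, hmul]
    congr 1
    have h1 : (fun ω => ({E r} : Set ℝ).indicator (fun _ => (1 : ℝ)) (H ω))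
        = Set.indicator {ω | H ω = E r} (fun _ => (1 : ℝ)) := by
      funext ω
      by_cases h : H ω = E r
      · simp [Set.indicator_apply, Set.mem_setOf_eq, Set.mem_singleton_iff, h]
      · simp [Set.indicator_apply, Set.mem_setOf_eq, Set.mem_singleton_iff, h]
    rw [h1, integral_indicator_const (1 : ℝ) (hA r), hp r, smul_eq_mul, mul_one, measureReal_def]
  -- step 4-5: gaussian change of variables per r
  have hshift : ∀ r : Fin D,
      ∫ x, g (σ * t * E r + x) ∂(gaussianReal 0 v)
        = ∫ x, g x * Real.exp (σ * E r * x - σ ^ 2 / 2 * (E r) ^ 2 * t)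
            * gaussianPDFReal 0 v x := by
    intro r
    rw [DecoAux.gaussian_integral_eq ht]
    have h1 := integral_sub_right_eq_self
      (μ := (MeasureTheory.volume : Measure ℝ))
      (fun y => gaussianPDFReal 0 v y * g (σ * t * E r + y)) (σ * t * E r)
    rw [← h1]
    congr 1
    funext x
    show gaussianPDFReal 0 v (x - σ * t * E r) * g (σ * t * E r + (x - σ * t * E r))
      = g x * Real.exp (σ * E r * x - σ ^ 2 / 2 * (E r) ^ 2 * t) * gaussianPDFReal 0 v x
    rw [show σ * t * E r + (x - σ * t * E r) = x from by ring]
    rw [gaussianPDFReal_sub x (σ * t * E r), zero_add, DecoAux.pdf_shift ht (σ * t * E r) x]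
    rw [show (2 * (σ * t * E r) * x - (σ * t * E r) ^ 2) / (2 * t)
        = σ * E r * x - σ ^ 2 / 2 * (E r) ^ 2 * t from by field_simp]
    ring
  -- step 6: recombine the sum
  have hfinal : ∑ r : Fin D, p r * ∫ x, g x
        * Real.exp (σ * E r * x - σ ^ 2 / 2 * (E r) ^ 2 * t) * gaussianPDFReal 0 v x
      = ∫ x, Real.exp ((σ / 2 * (E n + E m)) * x
          + (-(σ ^ 2 / 4 * ((E n) ^ 2 + (E m) ^ 2) * t))) * gaussianPDFReal 0 v x := by
    have hIr : ∀ r : Fin D, Integrable (fun x => p r * (g x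
        * Real.exp (σ * E r * x - σ ^ 2 / 2 * (E r) ^ 2 * t) * gaussianPDFReal 0 v x)) :=
      fun r => (hInt2 (σ * E r) (-(σ ^ 2 / 2 * (E r) ^ 2 * t)) _ (fun x => by ring)).const_mul _
    have h1 : ∀ r : Fin D, p r * ∫ x, g x
          * Real.exp (σ * E r * x - σ ^ 2 / 2 * (E r) ^ 2 * t) * gaussianPDFReal 0 v x
        = ∫ x, p r * (g x * Real.exp (σ * E r * x - σ ^ 2 / 2 * (E r) ^ 2 * t)
            * gaussianPDFReal 0 v x) := fun r => (integral_const_mul _ _).symm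
    rw [Finset.sum_congr rfl fun r _ => h1 r, ← integral_finset_sum _ fun r _ => hIr r]
    congr 1
    funext x
    have h2 : ∑ r : Fin D, p r * (g x * Real.exp (σ * E r * x - σ ^ 2 / 2 * (E r) ^ 2 * t)
          * gaussianPDFReal 0 v x)
        = (g x * den x) * gaussianPDFReal 0 v x := by
      rw [hdendef, Finset.mul_sum, Finset.sum_mul]
      exact Finset.sum_congr rfl fun r _ => by ring
    rw [h2, hg x, div_mul_cancel₀ _ (hdenpos x).ne']
    congr 2
  -- put everything together
  rw [hsplit]
  rw [Finset.sum_congr rfl fun r _ => by rw [hmapB (σ * t * E r), hshift r]]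
  rw [hfinal, DecoAux.exp_pdf_integral ht _ _]
  congr 1
  ring
end

section
/- Assume the spectral setup, and define m : [0,∞) → Matrix(N, N, ℂ) by m(t) := Σ_{n=1}^D Σ_{m=1}^D exp(−i ℏ⁻¹ (E_n − E_m) t − (σ²/8)(E_n − E_m)² t) · P_n ρ_0 P_m. Then m(0) = ρ_0, and m is differentiable with m'(t) = −i ℏ⁻¹ (Ĥ m(t) − m(t) Ĥ) + (σ²/8) (2 Ĥ m(t) Ĥ − Ĥ² m(t) − m(t) Ĥ²) for all t ≥ 0; that is, the mean state satisfies the Lindblad-type master equation with Lindblad operator proportional to Ĥ. -/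
open Matrix
open scoped ComplexOrder

/-- The mean state satisfies the Lindblad-type master equation with Lindblad
operator proportional to `Ĥ`. -/
theorem mean_state_satisfies_lindblad
    (N : ℕ) (hN : 1 ≤ N) (σ ℏ : ℝ) (hσ : 0 < σ) (hℏ : 0 < ℏ)
    (Hhat : Matrix (Fin N) (Fin N) ℂ) (hHherm : Hhat.IsHermitian)
    (D : ℕ) (hD : 1 ≤ D) (E : Fin D → ℝ) (hE : Function.Injective E)
    (P : Fin D → Matrix (Fin N) (Fin N) ℂ)
    (hPherm : ∀ r, (P r).IsHermitian)
    (hPorth : ∀ r s, r ≠ s → P r * P s = 0)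
    (hPidem : ∀ r, P r * P r = P r)
    (hPsum : ∑ r, P r = 1)
    (hHspec : Hhat = ∑ r, (E r : ℂ) • P r)
    (ρ0 : Matrix (Fin N) (Fin N) ℂ) (hρ0 : ρ0.PosSemidef) (hρ0tr : ρ0.trace = 1)
    (mt : ℝ → Matrix (Fin N) (Fin N) ℂ)
    (hmt : ∀ t, mt t = ∑ n, ∑ m,
      Complex.exp (-Complex.I * ((ℏ⁻¹ * (E n - E m) * t : ℝ) : ℂ)
          - ((σ ^ 2 / 8 * (E n - E m) ^ 2 * t : ℝ) : ℂ))
        • (P n * ρ0 * P m)) :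
    mt 0 = ρ0
    ∧ ∀ t ≥ (0 : ℝ), ∀ i j : Fin N,
        HasDerivAt (fun s => mt s i j)
          (((-Complex.I * ((ℏ⁻¹ : ℝ) : ℂ)) • (Hhat * mt t - mt t * Hhat)
            + ((σ ^ 2 / 8 : ℝ) : ℂ) •
              (2 • (Hhat * mt t * Hhat) - Hhat ^ 2 * mt t - mt t * Hhat ^ 2)) i j)
          t := by
  set B : Fin D → Fin D → Matrix (Fin N) (Fin N) ℂ := fun n m => P n * ρ0 * P m with hBdef
  have HP : ∀ n, Hhat * P n = (E n : ℂ) • P n := by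
    intro n
    rw [hHspec, Finset.sum_mul, Finset.sum_eq_single n]
    · rw [smul_mul_assoc, hPidem]
    · intro r _ hr; rw [smul_mul_assoc, hPorth r n hr, smul_zero]
    · simp
  have PH : ∀ m, P m * Hhat = (E m : ℂ) • P m := by
    intro m
    rw [hHspec, Finset.mul_sum, Finset.sum_eq_single m]
    · rw [mul_smul_comm, hPidem]
    · intro r _ hr; rw [mul_smul_comm, hPorth m r (Ne.symm hr), smul_zero]
    · simp
  have HB : ∀ n m, Hhat * B n m = (E n : ℂ) • B n m := by
    intro n m
    show Hhat * (P n * ρ0 * P m) = _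
    rw [← mul_assoc, ← mul_assoc, HP n, smul_mul_assoc, smul_mul_assoc]
  have BH : ∀ n m, B n m * Hhat = (E m : ℂ) • B n m := by
    intro n m
    show P n * ρ0 * P m * Hhat = _
    rw [mul_assoc, PH m, mul_smul_comm]
  have HBH : ∀ n m, Hhat * B n m * Hhat = ((E n : ℂ) * (E m : ℂ)) • B n m := by
    intro n m
    rw [HB, smul_mul_assoc, BH, smul_smul]
  have H2B : ∀ n m, Hhat ^ 2 * B n m = ((E n : ℂ) ^ 2) • B n m := by
    intro n m
    rw [sq, mul_assoc, HB, mul_smul_comm, HB, smul_smul, ← sq]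
  have BH2 : ∀ n m, B n m * Hhat ^ 2 = ((E m : ℂ) ^ 2) • B n m := by
    intro n m
    rw [sq, ← mul_assoc, BH, smul_mul_assoc, BH, smul_smul, ← sq]
  set a : Fin D → Fin D → ℂ := fun n m =>
    -Complex.I * ((ℏ⁻¹ * (E n - E m) : ℝ) : ℂ) - ((σ ^ 2 / 8 * (E n - E m) ^ 2 : ℝ) : ℂ)
    with hadef
  have harg : ∀ n m (t : ℝ),
      -Complex.I * ((ℏ⁻¹ * (E n - E m) * t : ℝ) : ℂ)
        - ((σ ^ 2 / 8 * (E n - E m) ^ 2 * t : ℝ) : ℂ) = a n m * t := by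
    intro n m t
    simp only [hadef]
    push_cast
    ring
  have hmt' : ∀ t, mt t = ∑ n, ∑ m, Complex.exp (a n m * t) • B n m := by
    intro t
    rw [hmt t]
    refine Finset.sum_congr rfl fun n _ => Finset.sum_congr rfl fun m _ => ?_
    rw [harg]
  constructor
  · rw [hmt' 0]
    have : ∀ n m : Fin D, Complex.exp (a n m * (0:ℝ)) • B n m = B n m := by
      intro n m; simp
    simp only [this]
    have h2 : ∑ n, ∑ m, B n m = (∑ n, P n) * ρ0 * (∑ m, P m) := by
      simp only [Finset.sum_mul, Finset.mul_sum, hBdef]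
      exact Finset.sum_comm
    rw [h2, hPsum, one_mul, mul_one]
  · intro t _ i j
    have key : ((-Complex.I * ((ℏ⁻¹ : ℝ) : ℂ)) • (Hhat * mt t - mt t * Hhat)
            + ((σ ^ 2 / 8 : ℝ) : ℂ) •
              (2 • (Hhat * mt t * Hhat) - Hhat ^ 2 * mt t - mt t * Hhat ^ 2))
        = ∑ n, ∑ m, (a n m * Complex.exp (a n m * t)) • B n m := by
      rw [hmt' t]
      simp only [Finset.mul_sum, Finset.sum_mul, Finset.smul_sum, ← Finset.sum_add_distrib,
        ← Finset.sum_sub_distrib, smul_mul_assoc, mul_smul_comm, HB, BH, HBH, H2B, BH2,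
        smul_smul]
      refine Finset.sum_congr rfl fun n _ => Finset.sum_congr rfl fun m _ => ?_
      match_scalars
      simp only [hadef]
      push_cast
      ring
    rw [key]
    have expand : ∀ s : ℝ, mt s i j = ∑ n, ∑ m, Complex.exp (a n m * s) * B n m i j := by
      intro s
      rw [hmt' s]
      simp [Matrix.sum_apply]
    have expand2 : (∑ n, ∑ m, (a n m * Complex.exp (a n m * t)) • B n m) i j
        = ∑ n, ∑ m, a n m * Complex.exp (a n m * t) * B n m i j := by
      simp [Matrix.sum_apply]
    rw [expand2]
    have : HasDerivAt (fun s : ℝ => ∑ n, ∑ m, Complex.exp (a n m * s) * B n m i j)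
        (∑ n, ∑ m, a n m * Complex.exp (a n m * t) * B n m i j) t := by
      refine HasDerivAt.fun_sum fun n _ => HasDerivAt.fun_sum fun m _ => ?_
      have h1 : HasDerivAt (fun z : ℂ => Complex.exp (a n m * z))
          (Complex.exp (a n m * t) * (a n m * 1)) (t : ℂ) :=
        ((hasDerivAt_id (t : ℂ)).const_mul (a n m)).cexp
      have h2 := (h1.comp_ofReal).mul_const (B n m i j)
      convert h2 using 1
      · rfl
      ring
    exact this.congr_of_eventuallyEq (Filter.Eventually.of_forall fun s => expand s)
end
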